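/- arXiv:1406.3772 — 6 statements merged into one kernel-verified Lean document; each statement's English description precedes it below -/
import Mathlib

section
/- For variables $\mu_1,\dots,\mu_{N-1}$ and $\lambda_1,\dots,\lambda_N$ (all distinct appropriately), the sum $\sum_{i=1}^{N-1} \frac{\prod_{l\neq j}(\lambda_l-\mu_i)}{\prod_{l\neq i}(\mu_l-\mu_i)}$ equals $\sum_{i\neq j}\lambda_i - \sum_{i=1}^{N-1}\mu_i$, for each fixed $j\in\{1,\dots,N\}$. -/
/-!
Let `P = ∏_{l ≠ j} (X - λ_l)` and `Q = ∏_i (X - μ_i)`. Both are monic of degree `N - 1`, so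
`P - Q` has degree `< N - 1` and is the Lagrange interpolant of its values `P(μ_i)` at the nodes
`μ_i`. Comparing the coefficients of `X^(N-2)` gives
`∑_i P(μ_i) / ∏_{l ≠ i} (μ_i - μ_l) = ∑_i μ_i - ∑_{l ≠ j} λ_l`, and flipping the signs of all
factors turns each summand into the negative of the summand of the theorem.
-/

open Finset Polynomial

theorem prod_sub_div_prod_sub_comm_of_card_eq_add_one {F ι κ : Type*} [Field F]
    {t : Finset ι} {u : Finset κ} (a : ι → F) (b : κ → F) (x : F) (h : #t = #u + 1) :
    (∏ l ∈ t, (a l - x)) / ∏ l ∈ u, (b l - x) = -((∏ l ∈ t, (x - a l)) / ∏ l ∈ u, (x - b l)) := by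
  have hpow : ((-1 : F) ^ #u) ≠ 0 := pow_ne_zero _ (neg_ne_zero.2 one_ne_zero)
  simp_rw [← neg_sub x, prod_neg, h, pow_succ, mul_assoc, mul_div_mul_left _ _ hpow]
  ring

namespace Lagrange

variable {F ι : Type*} [Field F] [DecidableEq ι] {s : Finset ι} {v : ι → F}

theorem sum_eval_div_prod_sub_eq_nextCoeff_add_sum (hvs : Set.InjOn v s) {P : F[X]}
    (hP : P.Monic) (hdeg : P.natDegree = #s) :
    ∑ i ∈ s, P.eval (v i) / ∏ j ∈ s.erase i, (v i - v j) = P.nextCoeff + ∑ i ∈ s, v i := by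
  rcases s.eq_empty_or_nonempty with rfl | hs
  · simp [nextCoeff, hdeg]
  have hPdeg : P.degree = #s := by rw [degree_eq_natDegree hP.ne_zero, hdeg]
  have hdeg_lt : (P - nodal s v).degree < #s :=
    hPdeg ▸ degree_sub_lt_left (by rw [hPdeg, degree_nodal]) hP.ne_zero
      (by rw [hP.leadingCoeff, nodal_monic.leadingCoeff])
  have hnodal : (nodal s v).coeff (#s - 1) = -∑ i ∈ s, v i := by
    rw [nodal_eq]
    exact prod_X_sub_C_coeff_card_pred s v hs.card_pos
  calc ∑ i ∈ s, P.eval (v i) / ∏ j ∈ s.erase i, (v i - v j)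
      = ∑ i ∈ s, (P - nodal s v).eval (v i) / ∏ j ∈ s.erase i, (v i - v j) :=
        sum_congr rfl fun i hi => by rw [eval_sub, eval_nodal_at_node hi, sub_zero]
    _ = (P - nodal s v).coeff (#s - 1) := (coeff_eq_sum hvs hdeg_lt).symm
    _ = P.nextCoeff + ∑ i ∈ s, v i := by
        rw [coeff_sub, hnodal, sub_neg_eq_add, ← hdeg,
          ← nextCoeff_of_natDegree_pos (hdeg ▸ hs.card_pos)]

end Lagrange

/-- For pairwise distinct `μ₁, …, μ_{N-1}` and `λ₁, …, λ_N`, and any fixed `j`,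
`∑_{i=1}^{N-1} ∏_{l≠j}(λ_l - μ_i) / ∏_{l≠i}(μ_l - μ_i) = ∑_{l≠j} λ_l - ∑_i μ_i`. -/
theorem stmt0 (n : ℕ) (μ : Fin n → ℂ) (lam : Fin (n + 1) → ℂ)
    (hμ : Function.Injective μ) (j : Fin (n + 1)) :
    ∑ i : Fin n, (∏ l ∈ univ \ {j}, (lam l - μ i)) / (∏ l ∈ univ \ {i}, (μ l - μ i))
      = (∑ l ∈ univ \ {j}, lam l) - ∑ i : Fin n, μ i := by
  have hcard : #(univ \ {j}) = n := by
    rw [sdiff_singleton_eq_erase, card_erase_of_mem (mem_univ j), card_univ, Fintype.card_fin,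
      Nat.add_sub_cancel]
  calc ∑ i : Fin n, (∏ l ∈ univ \ {j}, (lam l - μ i)) / (∏ l ∈ univ \ {i}, (μ l - μ i))
      = -∑ i : Fin n,
          (Lagrange.nodal (univ \ {j}) lam).eval (μ i) / ∏ l ∈ univ.erase i, (μ i - μ l) := by
        rw [← sum_neg_distrib]
        refine sum_congr rfl fun i _ => ?_
        rw [sdiff_singleton_eq_erase i, prod_sub_div_prod_sub_comm_of_card_eq_add_one,
          Lagrange.eval_nodal]
        rw [hcard, card_erase_of_mem (mem_univ i), card_univ, Fintype.card_fin,
          Nat.sub_add_cancel i.pos]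
    _ = -((Lagrange.nodal (univ \ {j}) lam).nextCoeff + ∑ i : Fin n, μ i) := by
        rw [Lagrange.sum_eval_div_prod_sub_eq_nextCoeff_add_sum hμ.injOn Lagrange.nodal_monic
          (by rw [Lagrange.natDegree_nodal, hcard, card_univ, Fintype.card_fin])]
    _ = (∑ l ∈ univ \ {j}, lam l) - ∑ i : Fin n, μ i := by
        rw [Lagrange.nodal_eq, prod_X_sub_C_nextCoeff]
        ring
end

section
/- Let $\lambda_1 > \mu_1 > \lambda_2 > \cdots > \lambda_{N-1} > \mu_{N-1} > \lambda_N$ be interlacing real sequences. Define the $N\times N$ real matrix $u$ by $u_{Nj} = \big(\prod_l(\mu_l-\lambda_j)/\prod_{l\neq j}(\lambda_l-\lambda_j)\big)^{1/2}$ and, for $i<N$, $u_{ij} = (\lambda_j-\mu_i)^{-1}\,u_{Nj}\,\big(-\prod_l(\lambda_l-\mu_i)/\prod_{l\neq i}(\mu_l-\mu_i)\big)^{1/2}$. Then $u$ is orthogonal (unitary with real entries), and the principal $(N-1)\times(N-1)$ submatrix of $u\,\mathrm{diag}(\lambda_1,\dots,\lambda_N)\,u^{*}$ equals $\mathrm{diag}(\mu_1,\dots,\mu_{N-1})$.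 -/
/-!
Write `P = ∏ (X - μ_l)`, `Q = ∏ (X - λ_j)`. The squares `c_j = u_{Nj}²` are the residues
`P(λ_j) / Q'(λ_j)` of `P / Q`, positive because the sequences interlace. Lagrange interpolation
at the nodes `λ_j` gives `∑ c_j = 1` (compare the coefficients of `X^(N-1)`),
`∑ c_j / (μ_i - λ_j) = P(μ_i) / Q(μ_i) = 0`, and, applied to `P / (X - μ_i)`,
`∑ c_j / ((λ_j - μ_i)(λ_j - μ_k)) = δ_{ik} / B_i`, with `B_i` the quantity under the second square
root. These are the orthonormality relations of the rows of `u`. Finally, row `i < N` of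
`u diag(λ)` is `μ_i` times row `i` of `u` plus `√B_i` times row `N`, so orthogonality yields the
compression `diag(μ)`.
-/

open Finset Polynomial Lagrange Matrix

theorem Lagrange.sum_div_sub_eq_eval_div_prod {F ι : Type*} [Field F] [DecidableEq ι]
    {s : Finset ι} {v : ι → F} (hvs : Set.InjOn v s) {p : F[X]} (hp : p.degree < #s) {x : F}
    (hx : ∀ i ∈ s, x ≠ v i) :
    ∑ i ∈ s, p.eval (v i) / (∏ j ∈ s.erase i, (v i - v j)) / (x - v i) =
      p.eval x / ∏ i ∈ s, (x - v i) := by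
  have hQ : ∏ i ∈ s, (x - v i) ≠ 0 := prod_ne_zero_iff.mpr fun i hi => sub_ne_zero.mpr (hx i hi)
  conv_rhs => rw [eq_interpolate hvs hp]
  rw [eval_interpolate_not_at_node _ hx, eval_nodal, mul_div_cancel_left₀ _ hQ]
  refine sum_congr rfl fun i hi => ?_
  rw [nodalWeight, prod_inv_distrib]
  ring

theorem Finset.prod_div_prod_eq_prod_neg_div_prod_neg {ι κ K : Type*} [Field K]
    {s : Finset ι} {t : Finset κ} (f : ι → K) (g : κ → K) (h : Even (#s + #t)) :
    (∏ i ∈ s, f i) / ∏ j ∈ t, g j = (∏ i ∈ s, -f i) / ∏ j ∈ t, -g j := by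
  rw [prod_neg, prod_neg, mul_div_mul_comm, div_eq_mul_inv ((-1 : K) ^ #s), ← inv_pow, inv_neg_one,
    ← pow_add, h.neg_one_pow, one_mul]

theorem Matrix.mul_diagonal_mul_transpose_apply_of_mul_sub {m ι R : Type*} [Fintype ι]
    [DecidableEq ι] [CommRing R] (u : Matrix m ι R) (d : ι → R) {r r' : m} {a t : R}
    (h : ∀ j, u r j * (d j - a) = t * u r' j) (q : m) :
    (u * diagonal d * uᵀ) r q = a * (u * uᵀ) r q + t * (u * uᵀ) r' q := by
  rw [mul_apply, mul_apply, mul_apply, mul_sum, mul_sum, ← sum_add_distrib]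
  simp only [mul_diagonal, transpose_apply]
  refine sum_congr rfl fun j _ => ?_
  linear_combination u q j * h j

namespace Interlacing

variable {n : ℕ} {lam : Fin (n + 1) → ℝ} {μ : Fin n → ℝ}

def Interlaces (lam : Fin (n + 1) → ℝ) (μ : Fin n → ℝ) : Prop :=
  ∀ i : Fin n, μ i < lam i.castSucc ∧ lam i.succ < μ i

noncomputable def lastRowSq (lam : Fin (n + 1) → ℝ) (μ : Fin n → ℝ) (j : Fin (n + 1)) : ℝ :=
  (∏ l : Fin n, (μ l - lam j)) / ∏ l ∈ univ \ {j}, (lam l - lam j)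

noncomputable def rowScaleSq (lam : Fin (n + 1) → ℝ) (μ : Fin n → ℝ) (i : Fin n) : ℝ :=
  -((∏ l : Fin (n + 1), (lam l - μ i)) / ∏ l ∈ univ \ {i}, (μ l - μ i))

theorem lastRowSq_eq (j : Fin (n + 1)) :
    lastRowSq lam μ j = (∏ l, (lam j - μ l)) / ∏ l ∈ univ.erase j, (lam j - lam l) := by
  rw [lastRowSq, prod_div_prod_eq_prod_neg_div_prod_neg _ _ (by simp [card_univ_sdiff])]
  simp only [neg_sub, sdiff_singleton_eq_erase]

theorem rowScaleSq_eq (i : Fin n) :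
    rowScaleSq lam μ i = -((∏ l, (μ i - lam l)) / ∏ l ∈ univ.erase i, (μ i - μ l)) := by
  have : Even (#(univ : Finset (Fin (n + 1))) + #(univ \ {i})) :=
    ⟨n, by simp only [card_univ_sdiff, card_univ, Fintype.card_fin, card_singleton]; grind [i.pos]⟩
  rw [rowScaleSq, prod_div_prod_eq_prod_neg_div_prod_neg _ _ this]
  simp only [neg_sub, sdiff_singleton_eq_erase]

theorem degree_nodal_lt_card (s : Finset (Fin n)) :
    (nodal s μ).degree < #(univ : Finset (Fin (n + 1))) := by
  rw [degree_nodal, card_univ, Fintype.card_fin]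
  exact_mod_cast (card_le_univ s).trans_lt (by simp)

section Lagrange

variable (hlam : Function.Injective lam)
include hlam

theorem sum_lastRowSq : ∑ j, lastRowSq lam μ j = 1 := by
  have hmonic : (nodal univ μ).coeff n = 1 := by
    simpa [natDegree_nodal] using (nodal_monic (s := univ) (v := μ)).coeff_natDegree
  simp only [lastRowSq_eq, ← eval_nodal (s := univ) (v := μ)]
  simpa [hmonic] using (coeff_eq_sum hlam.injOn (degree_nodal_lt_card (μ := μ) univ)).symm

variable (hne : ∀ i j, lam j ≠ μ i)
include hne

theorem sum_lastRowSq_div_sub (i : Fin n) : ∑ j, lastRowSq lam μ j / (lam j - μ i) = 0 := by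
  have h := sum_div_sub_eq_eval_div_prod (s := univ) hlam.injOn (p := nodal univ μ) (x := μ i)
    (degree_nodal_lt_card univ) fun j _ => (hne i j).symm
  rw [eval_nodal_at_node (mem_univ i), zero_div] at h
  rw [← neg_zero, ← h, ← sum_neg_distrib]
  refine sum_congr rfl fun j _ => ?_
  rw [lastRowSq_eq, eval_nodal, ← neg_sub (μ i) (lam j), div_neg]

theorem sum_lastRowSq_div_mul_div (i k : Fin n) :
    ∑ j, lastRowSq lam μ j / ((lam j - μ i) * (lam j - μ k)) =
      -((∏ l ∈ univ.erase i, (μ k - μ l)) / ∏ l, (μ k - lam l)) := by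
  have h := sum_div_sub_eq_eval_div_prod (s := univ) hlam.injOn (p := nodal (univ.erase i) μ)
    (x := μ k) (degree_nodal_lt_card _) fun j _ => (hne k j).symm
  simp only [eval_nodal] at h
  rw [← h, ← sum_neg_distrib]
  refine sum_congr rfl fun j _ => ?_
  have hi : lam j - μ i ≠ 0 := sub_ne_zero.mpr (hne i j)
  have hk : lam j - μ k ≠ 0 := sub_ne_zero.mpr (hne k j)
  have hk' : μ k - lam j ≠ 0 := sub_ne_zero.mpr (hne k j).symm
  have hD : ∏ l ∈ univ.erase j, (lam j - lam l) ≠ 0 :=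
    prod_ne_zero_iff.mpr fun l hl => sub_ne_zero.mpr (hlam.ne (ne_of_mem_erase hl).symm)
  rw [lastRowSq_eq, ← mul_prod_erase univ _ (mem_univ i)]
  field_simp
  ring

theorem rowScaleSq_inv (i : Fin n) :
    (rowScaleSq lam μ i)⁻¹ = ∑ j, lastRowSq lam μ j / ((lam j - μ i) * (lam j - μ i)) := by
  rw [sum_lastRowSq_div_mul_div hlam hne, rowScaleSq_eq, inv_neg, inv_div]

theorem sum_lastRowSq_div_mul_div_of_ne {i k : Fin n} (hik : i ≠ k) :
    ∑ j, lastRowSq lam μ j / ((lam j - μ i) * (lam j - μ k)) = 0 := by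
  rw [sum_lastRowSq_div_mul_div hlam hne,
    prod_eq_zero (mem_erase.mpr ⟨hik.symm, mem_univ k⟩) (sub_self _), zero_div, neg_zero]

end Lagrange

namespace Interlaces

variable (h : Interlaces lam μ)
include h

theorem lam_strictAnti : StrictAnti lam :=
  Fin.strictAnti_iff_succ_lt.mpr fun i => (h i).2.trans (h i).1

theorem mu_strictAnti : StrictAnti μ := fun i k hik =>
  (h k).1.trans ((h.lam_strictAnti.antitone (Fin.succ_le_castSucc_iff.mpr hik)).trans_lt
    (h i).2)

theorem lam_ne_mu (i : Fin n) (j : Fin (n + 1)) : lam j ≠ μ i := by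
  rcases le_or_gt j i.castSucc with hj | hj
  · exact ((h i).1.trans_le (h.lam_strictAnti.antitone hj)).ne'
  · exact ((h.lam_strictAnti.antitone (Fin.castSucc_lt_iff_succ_le.mp hj)).trans_lt (h i).2).ne

theorem lastRowSq_pos (j : Fin (n + 1)) : 0 < lastRowSq lam μ j := by
  rw [lastRowSq, ← compl_eq_univ_sdiff, ← Fin.image_succAbove_univ,
    prod_image fun _ _ _ _ hab => Fin.succAbove_right_injective hab, ← prod_div_distrib]
  refine prod_pos fun l _ => ?_
  rcases lt_or_ge l.castSucc j with hl | hl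
  · rw [Fin.succAbove_of_castSucc_lt _ _ hl]
    have h₁ := h.lam_strictAnti.antitone (Fin.castSucc_lt_iff_succ_le.mp hl)
    have h₂ := h.lam_strictAnti hl
    exact div_pos (by linarith [(h l).2]) (by linarith)
  · rw [Fin.succAbove_of_le_castSucc _ _ hl]
    have h₁ := h.lam_strictAnti.antitone hl
    have h₂ := h.lam_strictAnti (Fin.castSucc_lt_succ (i := l))
    exact div_pos_of_neg_of_neg (by linarith [(h l).1]) (by linarith)

end Interlaces

section Orthogonal

variable {u : Matrix (Fin (n + 1)) (Fin (n + 1)) ℝ}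
  (hlast : ∀ j, u (Fin.last n) j = √(lastRowSq lam μ j))
  (hrow : ∀ i j, u i.castSucc j = (lam j - μ i)⁻¹ * u (Fin.last n) j * √(rowScaleSq lam μ i))
include hlast

theorem last_mul_last (hc : ∀ j, 0 ≤ lastRowSq lam μ j) (j : Fin (n + 1)) :
    u (Fin.last n) j * u (Fin.last n) j = lastRowSq lam μ j := by
  rw [hlast, Real.mul_self_sqrt (hc j)]

variable (hlam : Function.Injective lam) (hne : ∀ i j, lam j ≠ μ i)
  (hc : ∀ j, 0 ≤ lastRowSq lam μ j)
include hrow hlam hne hc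

theorem sum_castSucc_mul_last (i : Fin n) :
    ∑ j, u i.castSucc j * u (Fin.last n) j = 0 := by
  have hterm : ∀ j, u i.castSucc j * u (Fin.last n) j =
      √(rowScaleSq lam μ i) * (lastRowSq lam μ j / (lam j - μ i)) := by
    intro j
    rw [hrow, ← last_mul_last hlast hc]
    ring
  rw [sum_congr rfl fun j _ => hterm j, ← mul_sum, sum_lastRowSq_div_sub hlam hne, mul_zero]

theorem sum_castSucc_mul_castSucc (hμ : Function.Injective μ) (i k : Fin n) :
    ∑ j, u i.castSucc j * u k.castSucc j = if i = k then 1 else 0 := by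
  have hterm : ∀ j, u i.castSucc j * u k.castSucc j = √(rowScaleSq lam μ i) *
      √(rowScaleSq lam μ k) * (lastRowSq lam μ j / ((lam j - μ i) * (lam j - μ k))) := by
    intro j
    rw [hrow, hrow, ← last_mul_last hlast hc, div_eq_mul_inv, mul_inv]
    ring
  rw [sum_congr rfl fun j _ => hterm j, ← mul_sum]
  split_ifs with hik
  · subst hik
    have hpos : 0 ≤ rowScaleSq lam μ i := by
      rw [← inv_nonneg, rowScaleSq_inv hlam hne]
      exact sum_nonneg fun j _ => div_nonneg (hc j) (mul_self_nonneg _)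
    have hne0 : rowScaleSq lam μ i ≠ 0 := by
      rw [rowScaleSq_eq, neg_ne_zero]
      refine div_ne_zero (prod_ne_zero_iff.mpr fun l _ => sub_ne_zero.mpr (hne i l).symm)
        (prod_ne_zero_iff.mpr fun l hl => sub_ne_zero.mpr (hμ.ne (ne_of_mem_erase hl).symm))
    rw [Real.mul_self_sqrt hpos, ← rowScaleSq_inv hlam hne, mul_inv_cancel₀ hne0]
  · rw [sum_lastRowSq_div_mul_div_of_ne hlam hne hik, mul_zero]

theorem mul_transpose_eq_one (hμ : Function.Injective μ) : u * uᵀ = 1 := by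
  ext p q
  simp only [mul_apply, transpose_apply, one_apply]
  induction p using Fin.lastCases with
  | last =>
    induction q using Fin.lastCases with
    | last => simp only [last_mul_last hlast hc, sum_lastRowSq hlam, if_true]
    | cast k =>
      simp only [mul_comm (u (Fin.last n) _), sum_castSucc_mul_last hlast hrow hlam hne hc,
        (Fin.castSucc_lt_last k).ne', if_false]
  | cast i =>
    induction q using Fin.lastCases with
    | last =>
      simp only [sum_castSucc_mul_last hlast hrow hlam hne hc, (Fin.castSucc_lt_last i).ne,
        if_false]
    | cast k =>
      simp only [sum_castSucc_mul_castSucc hlast hrow hlam hne hc hμ, Fin.castSucc_inj]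

end Orthogonal

end Interlacing

open Interlacing in
/-- Lemma 6.2 (unitarity of `u(μ,λ)`): for interlacing sequences
`λ₁ > μ₁ > λ₂ > ⋯ > λ_{N-1} > μ_{N-1} > λ_N`, the matrix `u` with entries
`u_{Nj} = √(∏_l(μ_l-λ_j)/∏_{l≠j}(λ_l-λ_j))` and, for `i < N`,
`u_{ij} = (λ_j-μ_i)⁻¹ u_{Nj} √(-∏_l(λ_l-μ_i)/∏_{l≠i}(μ_l-μ_i))`
is orthogonal, and the principal `(N-1)×(N-1)` submatrix of `u diag(λ) uᵀ` is `diag(μ)`. -/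
theorem stmt3 (n : ℕ) (lam : Fin (n + 1) → ℝ) (μ : Fin n → ℝ)
    (hinter : ∀ i : Fin n, μ i < lam i.castSucc ∧ lam i.succ < μ i)
    (u : Matrix (Fin (n + 1)) (Fin (n + 1)) ℝ)
    (hlast : ∀ j : Fin (n + 1), u (Fin.last n) j =
      Real.sqrt ((∏ l : Fin n, (μ l - lam j)) / ∏ l ∈ univ \ {j}, (lam l - lam j)))
    (hrow : ∀ (i : Fin n) (j : Fin (n + 1)), u i.castSucc j =
      (lam j - μ i)⁻¹ * u (Fin.last n) j *
        Real.sqrt (-((∏ l : Fin (n + 1), (lam l - μ i)) / ∏ l ∈ univ \ {i}, (μ l - μ i)))) :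
    u * u.transpose = 1 ∧ u.transpose * u = 1 ∧
      ∀ i i' : Fin n,
        (u * Matrix.diagonal lam * u.transpose) i.castSucc i'.castSucc
          = Matrix.diagonal μ i i' := by
  have h : Interlaces lam μ := hinter
  have hne := h.lam_ne_mu
  have hrow' : ∀ i j, u i.castSucc j =
      (lam j - μ i)⁻¹ * u (Fin.last n) j * √(rowScaleSq lam μ i) := hrow
  have huut : u * uᵀ = 1 := mul_transpose_eq_one hlast hrow' h.lam_strictAnti.injective hne
    (fun j => (h.lastRowSq_pos j).le) h.mu_strictAnti.injective
  refine ⟨huut, mul_eq_one_comm.mp huut, fun i k => ?_⟩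
  have hrow_sub : ∀ j,
      u i.castSucc j * (lam j - μ i) = √(rowScaleSq lam μ i) * u (Fin.last n) j := by
    intro j
    rw [hrow']
    field_simp [sub_ne_zero.mpr (hne i j)]
  rw [mul_diagonal_mul_transpose_apply_of_mul_sub u lam hrow_sub, huut]
  simp [one_apply, diagonal_apply, (Fin.castSucc_lt_last k).ne']
end

section
/- With trigonometric Dunkl operator $T_{\mu_i}(-k) = \partial_{\mu_i} - k\sum_{j\neq i}\frac{e^{\mu_i}}{e^{\mu_i}-e^{\mu_j}}(1-s_{ij}) - k\sum_{j<i}s_{ij} + k\frac{N-2}{2}$ in variables $\mu_1,\dots,\mu_{N-1}$, and rational Dunkl operator $D_{e^{\mu_i}}(-k)$ in the exponential variables $e^{\mu_i}$, one has the operator identity $D_{e^{\mu_{N-1}}}(-k)\cdots D_{e^{\mu_1}}(-k) = e^{-\sum_i\mu_i}\,\big(T_{\mu_{N-1}}(-k)-k\tfrac{N-2}{2}\big)\cdots\big(T_{\mu_1}(-k)-k\tfrac{N-2}{2}\big)$ on symmetric functions in $e^{\mu_1},\dots,e^{\mu_{N-1}}$. -/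
open Finset

/-- Partial derivative `∂_i f` at `μ`. -/
noncomputable def pd11 {n : ℕ} (i : Fin n) (f : (Fin n → ℝ) → ℝ) (μ : Fin n → ℝ) : ℝ :=
  fderiv ℝ f μ (Pi.single i 1)

/-- The rational Dunkl operator `D_{e^{μ_i}}(-k)` in the exponential variables `x_i = e^{μ_i}`,
expressed on functions of `μ`:
`D_{e^{μ_i}}(-k) f = e^{-μ_i} (∂_{μ_i} f - k ∑_{j≠i} e^{μ_i}/(e^{μ_i}-e^{μ_j}) (1-s_{ij}) f)`. -/
noncomputable def dexp11 {n : ℕ} (k : ℝ) (i : Fin n) (f : (Fin n → ℝ) → ℝ)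
    (μ : Fin n → ℝ) : ℝ :=
  Real.exp (-μ i) *
    (pd11 i f μ - k * ∑ j ∈ univ \ {i},
      Real.exp (μ i) / (Real.exp (μ i) - Real.exp (μ j)) * (f μ - f (μ ∘ Equiv.swap i j)))

/-- The shifted trigonometric Dunkl operator `T_{μ_i}(-k) - k(N-2)/2
 = ∂_{μ_i} - k ∑_{j≠i} e^{μ_i}/(e^{μ_i}-e^{μ_j}) (1-s_{ij}) - k ∑_{j<i} s_{ij}`. -/
noncomputable def tdunkl11 {n : ℕ} (k : ℝ) (i : Fin n) (f : (Fin n → ℝ) → ℝ)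
    (μ : Fin n → ℝ) : ℝ :=
  pd11 i f μ
    - k * ∑ j ∈ univ \ {i},
        Real.exp (μ i) / (Real.exp (μ i) - Real.exp (μ j)) * (f μ - f (μ ∘ Equiv.swap i j))
    - k * ∑ j ∈ univ.filter (fun j => j < i), f (μ ∘ Equiv.swap i j)

/-- Composition of operators along a list of indices (head applied last). -/
noncomputable def chain11 {n : ℕ}
    (op : Fin n → ((Fin n → ℝ) → ℝ) → (Fin n → ℝ) → ℝ) :
    List (Fin n) → ((Fin n → ℝ) → ℝ) → (Fin n → ℝ) → ℝ
  | [], f => f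
  | i :: t, f => op i (chain11 op t f)


namespace Stmt11Aux

variable {n : ℕ}

def U (n : ℕ) : Set (Fin n → ℝ) := {μ | Function.Injective μ}

lemma isOpen_U : IsOpen (U n) := by
  have h : U n = ⋂ p : {p : Fin n × Fin n // p.1 ≠ p.2},
      {μ : Fin n → ℝ | μ p.1.1 = μ p.1.2}ᶜ := by
    ext μ
    simp only [Set.mem_iInter, Set.mem_compl_iff, Set.mem_setOf_eq, U]
    constructor
    · intro hinj p he; exact p.2 (hinj he)
    · intro h a b hab
      by_contra hne
      exact h ⟨(a, b), hne⟩ hab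
  rw [h]
  exact isOpen_iInter_of_finite fun p =>
    (isClosed_eq (continuous_apply p.1.1) (continuous_apply p.1.2)).isOpen_compl

lemma contDiff_compEquiv (e : Equiv.Perm (Fin n)) :
    ContDiff ℝ (⊤ : ℕ∞) (fun μ : Fin n → ℝ => μ ∘ e) :=
  contDiff_pi.2 fun i => contDiff_apply ℝ ℝ (e i)

lemma exp_sub_ne {μ : Fin n → ℝ} (hμ : μ ∈ U n) {i j : Fin n} (hij : j ≠ i) :
    Real.exp (μ i) - Real.exp (μ j) ≠ 0 := by
  rw [sub_ne_zero]
  intro h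
  exact hij (hμ (Real.exp_injective h)).symm

lemma contDiffAt_pd11 (i : Fin n) {g : (Fin n → ℝ) → ℝ} {μ : Fin n → ℝ}
    (hg : ContDiffAt ℝ (⊤ : ℕ∞) g μ) : ContDiffAt ℝ (⊤ : ℕ∞) (pd11 i g) μ := by
  have h1 : ContDiffAt ℝ (⊤ : ℕ∞) (fderiv ℝ g) μ := hg.fderiv_right (m := (⊤ : ℕ∞)) (by simp)
  exact ((ContinuousLinearMap.apply ℝ ℝ (Pi.single i (1:ℝ))).contDiff.contDiffAt).comp μ h1

lemma contDiffAt_tdunkl (k : ℝ) (i : Fin n) {g : (Fin n → ℝ) → ℝ}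
    (hg : ∀ ν ∈ U n, ContDiffAt ℝ (⊤ : ℕ∞) g ν) :
    ∀ μ ∈ U n, ContDiffAt ℝ (⊤ : ℕ∞) (tdunkl11 k i g) μ := by
  intro μ hμ
  have hswap : ∀ j : Fin n, ContDiffAt ℝ (⊤ : ℕ∞) (fun ν : Fin n → ℝ => g (ν ∘ Equiv.swap i j)) μ :=
    fun j => (hg _ (hμ.comp (Equiv.swap i j).injective)).comp μ (contDiff_compEquiv _).contDiffAt
  have hexp : ∀ l : Fin n, ContDiffAt ℝ (⊤ : ℕ∞) (fun ν : Fin n → ℝ => Real.exp (ν l)) μ :=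
    fun l => (Real.contDiff_exp.comp (contDiff_apply ℝ ℝ l)).contDiffAt
  have hpd : ContDiffAt ℝ (⊤ : ℕ∞) (fun ν => pd11 i g ν) μ := contDiffAt_pd11 i (hg μ hμ)
  unfold tdunkl11
  refine (hpd.sub ?_).sub ?_
  · refine contDiffAt_const.mul (ContDiffAt.sum fun j hj => ?_)
    have hjne : j ≠ i := by simpa using (Finset.mem_sdiff.1 hj).2
    exact ((hexp i).div ((hexp i).sub (hexp j)) (exp_sub_ne hμ hjne)).mul
      ((hg μ hμ).sub (hswap j))
  · exact contDiffAt_const.mul (ContDiffAt.sum fun j _ => hswap j)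

lemma sm_chain (k : ℝ) {f : (Fin n → ℝ) → ℝ} (hf : ContDiff ℝ (⊤ : ℕ∞) f) :
    ∀ l : List (Fin n), ∀ μ ∈ U n, ContDiffAt ℝ (⊤ : ℕ∞) (chain11 (tdunkl11 k) l f) μ
  | [] => fun μ _ => hf.contDiffAt
  | i :: t => contDiffAt_tdunkl k i (sm_chain k hf t)

noncomputable def Efun (n m : ℕ) (ν : Fin n → ℝ) : ℝ :=
  Real.exp (-∑ j ∈ univ.filter (fun j : Fin n => (j : ℕ) < m), ν j)

lemma hasFDerivAt_Efun (m : ℕ) (μ : Fin n → ℝ) :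
    HasFDerivAt (Efun n m)
      (Efun n m μ • (-(∑ j ∈ univ.filter (fun j : Fin n => (j : ℕ) < m),
        ContinuousLinearMap.proj (R := ℝ) (φ := fun _ : Fin n => ℝ) j))) μ := by
  have h1 : HasFDerivAt
      (fun ν : Fin n → ℝ => -∑ j ∈ univ.filter (fun j : Fin n => (j : ℕ) < m), ν j)
      (-(∑ j ∈ univ.filter (fun j : Fin n => (j : ℕ) < m),
        ContinuousLinearMap.proj (R := ℝ) (φ := fun _ : Fin n => ℝ) j)) μ := by
    have h2 := ((∑ j ∈ univ.filter (fun j : Fin n => (j : ℕ) < m),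
        ContinuousLinearMap.proj (R := ℝ) (φ := fun _ : Fin n => ℝ) j).hasFDerivAt (x := μ)).neg
    refine h2.congr_of_eventuallyEq (Filter.Eventually.of_forall fun ν => ?_)
    simp [ContinuousLinearMap.sum_apply]
  exact h1.exp

lemma differentiableAt_Efun (m : ℕ) (μ : Fin n → ℝ) : DifferentiableAt ℝ (Efun n m) μ :=
  (hasFDerivAt_Efun m μ).differentiableAt

lemma pd11_Efun (m : ℕ) (hm : m < n) (μ : Fin n → ℝ) :
    pd11 ⟨m, hm⟩ (Efun n m) μ = 0 := by
  unfold pd11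
  rw [(hasFDerivAt_Efun m μ).fderiv]
  simp only [ContinuousLinearMap.smul_apply, ContinuousLinearMap.neg_apply,
    ContinuousLinearMap.sum_apply, ContinuousLinearMap.proj_apply, smul_eq_mul]
  rw [Finset.sum_eq_zero, neg_zero, mul_zero]
  intro j hj
  have : j ≠ ⟨m, hm⟩ := by
    intro h; subst h; simp at hj
  exact Pi.single_eq_of_ne this 1

lemma Efun_swap_lt (m : ℕ) (hm : m < n) {j : Fin n} (hj : (j : ℕ) < m) (μ : Fin n → ℝ) :
    Efun n m (μ ∘ Equiv.swap ⟨m, hm⟩ j)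
      = Efun n m μ * Real.exp (μ j - μ ⟨m, hm⟩) := by
  set i : Fin n := ⟨m, hm⟩ with hi
  have hji : j ≠ i := by intro h; rw [h] at hj; simp [hi] at hj
  have hjF : j ∈ univ.filter (fun j : Fin n => (j : ℕ) < m) := by simp [hj]
  unfold Efun
  rw [← Real.exp_add]
  congr 1
  have key : ∑ l ∈ univ.filter (fun l : Fin n => (l : ℕ) < m), (μ ∘ Equiv.swap i j) l
      = μ i + ∑ l ∈ (univ.filter (fun l : Fin n => (l : ℕ) < m)).erase j, μ l := by
    rw [← Finset.add_sum_erase _ _ hjF]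
    congr 1
    · simp [Equiv.swap_apply_right]
    · refine Finset.sum_congr rfl fun l hl => ?_
      have hlj : l ≠ j := Finset.ne_of_mem_erase hl
      have hli : l ≠ i := by
        have := Finset.mem_of_mem_erase hl
        simp only [Finset.mem_filter] at this
        intro h; rw [h] at this; simp [hi] at this
      simp [Equiv.swap_apply_of_ne_of_ne hli hlj]
  have key2 : ∑ l ∈ univ.filter (fun l : Fin n => (l : ℕ) < m), μ l
      = μ j + ∑ l ∈ (univ.filter (fun l : Fin n => (l : ℕ) < m)).erase j, μ l := by
    rw [← Finset.add_sum_erase _ _ hjF]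
  rw [key, key2]
  ring

lemma Efun_swap_ge (m : ℕ) (hm : m < n) {j : Fin n} (hj : ¬ (j : ℕ) < m) (μ : Fin n → ℝ) :
    Efun n m (μ ∘ Equiv.swap ⟨m, hm⟩ j) = Efun n m μ := by
  unfold Efun
  congr 1
  congr 1
  refine Finset.sum_congr rfl fun l hl => ?_
  simp only [Finset.mem_filter] at hl
  have hli : l ≠ ⟨m, hm⟩ := by intro h; rw [h] at hl; simp at hl
  have hlj : l ≠ j := by intro h; rw [h] at hl; exact hj hl.2
  simp [Equiv.swap_apply_of_ne_of_ne hli hlj]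

lemma pd11_congr {g g' : (Fin n → ℝ) → ℝ} (i : Fin n) {μ : Fin n → ℝ}
    (h : g =ᶠ[nhds μ] g') : pd11 i g μ = pd11 i g' μ := by
  unfold pd11
  rw [h.fderiv_eq]

lemma pd11_mul (i : Fin n) {g h : (Fin n → ℝ) → ℝ} {μ : Fin n → ℝ}
    (hg : DifferentiableAt ℝ g μ) (hh : DifferentiableAt ℝ h μ) :
    pd11 i (fun ν => g ν * h ν) μ = g μ * pd11 i h μ + h μ * pd11 i g μ := by
  unfold pd11
  rw [fderiv_fun_mul hg hh]
  simp

lemma step (k : ℝ) (m : ℕ) (hm : m < n) (h : (Fin n → ℝ) → ℝ) {μ : Fin n → ℝ}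
    (hμ : μ ∈ U n) (hdiff : DifferentiableAt ℝ h μ) :
    dexp11 k ⟨m, hm⟩ (fun ν => Efun n m ν * h ν) μ
      = Real.exp (-μ ⟨m, hm⟩) * (Efun n m μ * tdunkl11 k ⟨m, hm⟩ h μ) := by
  set i : Fin n := ⟨m, hm⟩ with hidef
  have hsum : ∀ j ∈ univ \ {i},
      Real.exp (μ i) / (Real.exp (μ i) - Real.exp (μ j)) *
        ((fun ν => Efun n m ν * h ν) μ - (fun ν => Efun n m ν * h ν) (μ ∘ Equiv.swap i j))
      = Efun n m μ * (Real.exp (μ i) / (Real.exp (μ i) - Real.exp (μ j)) *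
            (h μ - h (μ ∘ Equiv.swap i j))
          + if (j : ℕ) < m then h (μ ∘ Equiv.swap i j) else 0) := by
    intro j hj
    have hjne : j ≠ i := by simpa using (Finset.mem_sdiff.1 hj).2
    have hne := exp_sub_ne hμ hjne
    simp only
    by_cases hjm : (j : ℕ) < m
    · rw [if_pos hjm]
      have hsl : Efun n m (μ ∘ Equiv.swap i j) = Efun n m μ * Real.exp (μ j - μ i) :=
        Efun_swap_lt m hm hjm μ
      rw [hsl]
      have key : Real.exp (μ i) / (Real.exp (μ i) - Real.exp (μ j)) *
          (1 - Real.exp (μ j - μ i)) = 1 := by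
        rw [div_mul_eq_mul_div, div_eq_one_iff_eq hne, mul_sub, mul_one, ← Real.exp_add]
        ring_nf
      linear_combination (Efun n m μ * h (μ ∘ Equiv.swap i j)) * key
    · rw [if_neg hjm]
      have hsg : Efun n m (μ ∘ Equiv.swap i j) = Efun n m μ := Efun_swap_ge m hm hjm μ
      rw [hsg]
      ring
  unfold dexp11 tdunkl11
  rw [pd11_mul i (differentiableAt_Efun m μ) hdiff]
  have h0 : pd11 i (Efun n m) μ = 0 := pd11_Efun m hm μ
  rw [h0]
  rw [Finset.sum_congr rfl hsum, ← Finset.mul_sum, Finset.sum_add_distrib]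
  have hfilter : ∑ j ∈ univ.filter (fun j => j < i), h (μ ∘ Equiv.swap i j)
      = ∑ j ∈ univ \ {i}, (if (j : ℕ) < m then h (μ ∘ Equiv.swap i j) else 0) := by
    rw [Finset.sum_filter]
    rw [Finset.sum_congr rfl (fun j _ =>
      if_congr (show j < i ↔ (j : ℕ) < m from Iff.rfl) rfl rfl)]
    rw [Finset.sdiff_singleton_eq_erase, Finset.sum_erase _ (by exact if_neg (lt_irrefl m))]
  rw [hfilter]
  ring

lemma dexp11_congr (k : ℝ) (i : Fin n) {g g' : (Fin n → ℝ) → ℝ} {μ : Fin n → ℝ}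
    (hμ : μ ∈ U n) (hev : ∀ ν ∈ U n, g ν = g' ν) :
    dexp11 k i g μ = dexp11 k i g' μ := by
  unfold dexp11
  have h1 : pd11 i g μ = pd11 i g' μ :=
    pd11_congr i (Filter.eventuallyEq_of_mem (isOpen_U.mem_nhds hμ) hev)
  rw [h1, hev μ hμ]
  have h2 : (∑ j ∈ univ \ {i}, Real.exp (μ i) / (Real.exp (μ i) - Real.exp (μ j)) *
        (g' μ - g (μ ∘ Equiv.swap i j)))
      = ∑ j ∈ univ \ {i}, Real.exp (μ i) / (Real.exp (μ i) - Real.exp (μ j)) *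
        (g' μ - g' (μ ∘ Equiv.swap i j)) :=
    Finset.sum_congr rfl fun j _ => by
      rw [hev _ (hμ.comp (Equiv.swap i j).injective)]
  rw [h2]

end Stmt11Aux

/-- On symmetric functions of `e^{μ_1},…,e^{μ_{N-1}}`:
`D_{e^{μ_{N-1}}}(-k) ⋯ D_{e^{μ_1}}(-k)
  = e^{-∑_i μ_i} (T_{μ_{N-1}}(-k) - k(N-2)/2) ⋯ (T_{μ_1}(-k) - k(N-2)/2)`. -/
theorem stmt11 (n : ℕ) (k : ℝ) (f : (Fin n → ℝ) → ℝ) (hf : ContDiff ℝ (⊤ : ℕ∞) f)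
    (hsym : ∀ (σ : Equiv.Perm (Fin n)) (μ : Fin n → ℝ), f (μ ∘ σ) = f μ)
    (μ : Fin n → ℝ) (hμ : Function.Injective μ) :
    chain11 (dexp11 k) (List.finRange n).reverse f μ
      = Real.exp (-∑ i, μ i) * chain11 (tdunkl11 k) (List.finRange n).reverse f μ := by
  open Stmt11Aux in
  have key : ∀ m, m ≤ n → ∀ ν : Fin n → ℝ, ν ∈ U n →
      chain11 (dexp11 k) ((List.finRange n).take m).reverse f ν
        = Efun n m ν * chain11 (tdunkl11 k) ((List.finRange n).take m).reverse f ν := by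
    intro m
    induction m with
    | zero =>
      intro _ ν hν
      simp [chain11, Efun]
    | succ m ih =>
      intro hm ν hν
      have hmn : m < n := hm
      have hl : ((List.finRange n).take (m + 1)).reverse
          = (⟨m, hmn⟩ : Fin n) :: ((List.finRange n).take m).reverse := by
        rw [List.take_succ]
        rw [List.getElem?_eq_getElem (by simpa using hmn)]
        simp [List.getElem_finRange, Fin.cast]
      rw [hl]
      set g₁ := chain11 (dexp11 k) ((List.finRange n).take m).reverse f with hg₁
      set h := chain11 (tdunkl11 k) ((List.finRange n).take m).reverse f with hh
      have hsm : ∀ ρ ∈ U n, ContDiffAt ℝ (⊤ : ℕ∞) h ρ := sm_chain k hf _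
      have hev : g₁ =ᶠ[nhds ν] fun ρ => Efun n m ρ * h ρ :=
        Filter.eventuallyEq_of_mem (isOpen_U.mem_nhds hν)
          (fun ρ hρ => ih (le_of_lt hmn) ρ hρ)
      have e1 : chain11 (dexp11 k) ((⟨m, hmn⟩ : Fin n) :: ((List.finRange n).take m).reverse) f ν
          = dexp11 k ⟨m, hmn⟩ g₁ ν := rfl
      have e2 : dexp11 k ⟨m, hmn⟩ g₁ ν
          = dexp11 k ⟨m, hmn⟩ (fun ρ => Efun n m ρ * h ρ) ν :=
        dexp11_congr k ⟨m, hmn⟩ hν fun ρ hρ => ih (le_of_lt hmn) ρ hρ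
      rw [e1, e2, step k m hmn h hν ((hsm ν hν).differentiableAt (by simp))]
      have hE : Efun n (m + 1) ν = Real.exp (-ν ⟨m, hmn⟩) * Efun n m ν := by
        have hins : univ.filter (fun j : Fin n => (j : ℕ) < m + 1)
            = insert (⟨m, hmn⟩ : Fin n) (univ.filter fun j : Fin n => (j : ℕ) < m) := by
          ext j
          simp only [Finset.mem_filter, Finset.mem_insert, Finset.mem_univ, true_and,
            Nat.lt_succ_iff_lt_or_eq, Fin.ext_iff]
          tauto
        have hnotmem : (⟨m, hmn⟩ : Fin n) ∉ univ.filter (fun j : Fin n => (j : ℕ) < m) := by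
          simp
        unfold Efun
        rw [hins, Finset.sum_insert hnotmem, neg_add, Real.exp_add]
      rw [hE]
      show _ = Real.exp (-ν ⟨m, hmn⟩) * Efun n m ν *
        tdunkl11 k ⟨m, hmn⟩ (chain11 (tdunkl11 k) ((List.finRange n).take m).reverse f) ν
      rw [← hh]
      ring
  have h1 := key n le_rfl μ hμ
  rw [List.take_of_length_le (by simp)] at h1
  have hEn : Stmt11Aux.Efun n n μ = Real.exp (-∑ i, μ i) := by
    have : univ.filter (fun j : Fin n => (j : ℕ) < n) = univ :=
      Finset.filter_true_of_mem fun j _ => j.isLt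
    unfold Stmt11Aux.Efun
    rw [this]
  rw [hEn] at h1
  exact h1
end

section
/- For $i > j$, the trigonometric Dunkl operator $T_{\mu_i}(-k) = \partial_{\mu_i} - k\sum_{l\neq i}\frac{e^{\mu_i}}{e^{\mu_i}-e^{\mu_l}}(1-s_{il}) - k\sum_{l<i}s_{il} + k\frac{N-2}{2}$ satisfies the commutation relation $(T_{\mu_i}(-k) + k\,s_{ij})\circ M_{e^{-\mu_j}} = M_{e^{-\mu_j}}\circ T_{\mu_i}(-k)$, where $M_{e^{-\mu_j}}$ denotes multiplication by $e^{-\mu_j}$. -/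
open Finset

/-- Partial derivative `∂_i f` at `μ`. -/
noncomputable def pd12 {n : ℕ} (i : Fin n) (f : (Fin n → ℝ) → ℝ) (μ : Fin n → ℝ) : ℝ :=
  fderiv ℝ f μ (Pi.single i 1)

/-- The trigonometric Dunkl operator (in `n = N - 1` variables, so `N - 2 = n - 1`):
`T_{μ_i}(-k) = ∂_{μ_i} - k ∑_{l≠i} e^{μ_i}/(e^{μ_i}-e^{μ_l})(1-s_{il})
  - k ∑_{l<i} s_{il} + k (N-2)/2`. -/
noncomputable def tdunkl12 {n : ℕ} (k : ℝ) (i : Fin n) (f : (Fin n → ℝ) → ℝ)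
    (μ : Fin n → ℝ) : ℝ :=
  pd12 i f μ
    - k * ∑ l ∈ univ \ {i},
        Real.exp (μ i) / (Real.exp (μ i) - Real.exp (μ l)) * (f μ - f (μ ∘ Equiv.swap i l))
    - k * ∑ l ∈ univ.filter (fun l => l < i), f (μ ∘ Equiv.swap i l)
    + k * ((n : ℝ) - 1) / 2 * f μ

/-- For `i > j`: `(T_{μ_i}(-k) + k s_{ij}) ∘ M_{e^{-μ_j}} = M_{e^{-μ_j}} ∘ T_{μ_i}(-k)`,
where `M_{e^{-μ_j}}` is multiplication by `e^{-μ_j}`. -/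
theorem stmt12 (n : ℕ) (k : ℝ) (i j : Fin n) (hji : j < i)
    (f : (Fin n → ℝ) → ℝ) (hf : ContDiff ℝ (⊤ : ℕ∞) f)
    (μ : Fin n → ℝ) (hμ : Function.Injective μ) :
    tdunkl12 k i (fun ν => Real.exp (-ν j) * f ν) μ
        + k * ((fun ν => Real.exp (-ν j) * f ν) (μ ∘ Equiv.swap i j))
      = Real.exp (-μ j) * tdunkl12 k i f μ := by
  have hij : i ≠ j := hji.ne'
  have hexp : Real.exp (μ i) - Real.exp (μ j) ≠ 0 := by
    rw [sub_ne_zero]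
    intro h
    exact hij (hμ (Real.exp_eq_exp.mp h))
  have hfd : DifferentiableAt ℝ f μ := (hf.differentiable (by simp)).differentiableAt
  have hg : HasFDerivAt (fun ν : Fin n → ℝ => Real.exp (-ν j))
      (Real.exp (-μ j) • (-(ContinuousLinearMap.proj j : (Fin n → ℝ) →L[ℝ] ℝ))) μ := by
    have := ((ContinuousLinearMap.proj j : (Fin n → ℝ) →L[ℝ] ℝ).hasFDerivAt (x := μ)).neg.exp
    simpa using this
  have hprod : HasFDerivAt (fun ν : Fin n → ℝ => Real.exp (-ν j) * f ν)
      ((Real.exp (-μ j)) • fderiv ℝ f μ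
        + f μ • (Real.exp (-μ j) • (-(ContinuousLinearMap.proj j : (Fin n → ℝ) →L[ℝ] ℝ)))) μ :=
    hg.mul hfd.hasFDerivAt
  have hpd : pd12 i (fun ν => Real.exp (-ν j) * f ν) μ = Real.exp (-μ j) * pd12 i f μ := by
    simp only [pd12, hprod.fderiv]
    simp [Pi.single_eq_of_ne hji.ne]
  have hjS : j ∈ univ \ ({i} : Finset (Fin n)) := by simp [hij.symm, Ne.symm hij]
  have hjT : j ∈ univ.filter (fun l => l < i) := by simp [hji]
  have key1 : ∀ l ∈ (univ \ ({i} : Finset (Fin n))).erase j, (μ ∘ Equiv.swap i l) j = μ j := by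
    intro l hl
    simp only [Finset.mem_erase, Finset.mem_sdiff, Finset.mem_singleton] at hl
    simp [Function.comp_apply, Equiv.swap_apply_of_ne_of_ne hji.ne (Ne.symm hl.1)]
  have key2 : ∀ l ∈ (univ.filter (fun l => l < i)).erase j, (μ ∘ Equiv.swap i l) j = μ j := by
    intro l hl
    simp only [Finset.mem_erase, Finset.mem_filter] at hl
    simp [Function.comp_apply, Equiv.swap_apply_of_ne_of_ne hji.ne (Ne.symm hl.1)]
  have hswapj : (μ ∘ Equiv.swap i j) j = μ i := by
    simp [Function.comp_apply]
  simp only [tdunkl12, hpd]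
  rw [← Finset.sum_erase_add _ _ hjS, ← Finset.sum_erase_add _ _ hjS,
      ← Finset.sum_erase_add _ _ hjT, ← Finset.sum_erase_add _ _ hjT]
  have e1 : ∑ l ∈ (univ \ ({i} : Finset (Fin n))).erase j,
      Real.exp (μ i) / (Real.exp (μ i) - Real.exp (μ l)) *
        ((fun ν => Real.exp (-ν j) * f ν) μ - (fun ν => Real.exp (-ν j) * f ν) (μ ∘ Equiv.swap i l))
    = Real.exp (-μ j) * ∑ l ∈ (univ \ ({i} : Finset (Fin n))).erase j,
        Real.exp (μ i) / (Real.exp (μ i) - Real.exp (μ l)) * (f μ - f (μ ∘ Equiv.swap i l)) := by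
    rw [Finset.mul_sum]
    refine Finset.sum_congr rfl fun l hl => ?_
    simp only [key1 l hl]
    ring
  have e2 : ∑ l ∈ (univ.filter (fun l => l < i)).erase j,
      (fun ν => Real.exp (-ν j) * f ν) (μ ∘ Equiv.swap i l)
    = Real.exp (-μ j) * ∑ l ∈ (univ.filter (fun l => l < i)).erase j, f (μ ∘ Equiv.swap i l) := by
    rw [Finset.mul_sum]
    refine Finset.sum_congr rfl fun l hl => ?_
    simp only [key2 l hl]
  rw [e1, e2]
  simp only [hswapj]
  rw [Real.exp_neg, Real.exp_neg]
  field_simp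
  ring
end

section
/- Let $\mathrm{Res}_k:\mathbb{C}[\mu_i^j : 1\le i\le N-1, 1\le j\le k]\to\mathbb{C}[\mu_1,\dots,\mu_{N-1}]$ be the specialization $\mu_i^j\mapsto\mu_i$. Then the Dunkl Laplacians satisfy $\mathrm{Res}_k\circ \overline{L}_{p_2}^{(k(N-1))}(-1/k) = \frac{1}{k}\,\overline{L}_{p_2}^{(N-1)}(-k)\circ\mathrm{Res}_k$, where $\overline{L}_{p_2}^{(n)}(c) = \sum_a \partial_a^2 + 2c\sum_{a<b}\frac{\partial_a-\partial_b}{z_a-z_b}$ in $n$ variables $z_a$ with parameter $c$. -/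
open Finset Filter

open Finset Filter Asymptotics Topology

section aux14
variable {ι : Type*} [Fintype ι] [DecidableEq ι]

noncomputable def swapCLM14 (a b : ι) : (ι → ℝ) →L[ℝ] (ι → ℝ) :=
  ContinuousLinearMap.pi fun p => ContinuousLinearMap.proj (Equiv.swap a b p)

lemma swapCLM14_apply (a b : ι) (z : ι → ℝ) : swapCLM14 a b z = z ∘ Equiv.swap a b := rfl

lemma sub_swapCLM14 (a b : ι) (hab : a ≠ b) (z : ι → ℝ) :
    z - swapCLM14 a b z = (z a - z b) • (Pi.single a 1 - Pi.single b 1) := by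
  funext p
  simp only [Pi.sub_apply, swapCLM14_apply, Function.comp_apply, Pi.smul_apply,
    Pi.single_apply, smul_eq_mul]
  by_cases hpa : p = a
  · simp [hpa, Equiv.swap_apply_left, if_neg hab]
  · by_cases hpb : p = b
    · simp [hpb, Equiv.swap_apply_right, if_neg (Ne.symm hab), hab]
    · rw [Equiv.swap_apply_of_ne_of_ne hpa hpb, if_neg hpa, if_neg hpb]
      ring

/-- key limit: an anti-symmetric C¹ function divided by `z a - z b` -/
lemma quot_limit14 (F : (ι → ℝ) → ℝ) (hF : ContDiff ℝ (⊤ : ℕ∞) F) (a b : ι) (hab : a ≠ b)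
    (x : ι → ℝ) (hx : x a = x b)
    (hanti : ∀ z, F (z ∘ Equiv.swap a b) = - F z) :
    Tendsto (fun z => F z / (z a - z b)) (nhdsWithin x {z | z a ≠ z b})
      (nhds ((fderiv ℝ F x (Pi.single a 1) - fderiv ℝ F x (Pi.single b 1)) / 2)) := by
  set l := nhdsWithin x {z : ι → ℝ | z a ≠ z b}
  set T := swapCLM14 a b
  have hTx : T x = x := by
    funext p
    simp only [T, swapCLM14_apply, Function.comp_apply]
    rcases Equiv.swap_apply_def a b p with _
    by_cases hpa : p = a
    · simp [hpa, Equiv.swap_apply_left, hx]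
    · by_cases hpb : p = b
      · simp [hpb, Equiv.swap_apply_right, hx]
      · rw [Equiv.swap_apply_of_ne_of_ne hpa hpb]
  have hstrict := (hF.contDiffAt (x := x)).hasStrictFDerivAt (by simp)
  set f' := fderiv ℝ F x with hf'
  set v : ι → ℝ := Pi.single a 1 - Pi.single b 1 with hv
  set D : ℝ := f' v with hD
  have hDval : D = fderiv ℝ F x (Pi.single a 1) - fderiv ℝ F x (Pi.single b 1) := by
    simp [hD, hv, hf']
  -- compose little-o with z ↦ (z, T z)
  have htend : Tendsto (fun z : ι → ℝ => (z, T z)) l (𝓝 (x, x)) := by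
    have : Tendsto (fun z : ι → ℝ => (z, T z)) (𝓝 x) (𝓝 (x, T x)) :=
      (continuous_id.prodMk T.continuous).tendsto x
    rw [hTx] at this
    exact this.mono_left nhdsWithin_le_nhds
  have hlo := hstrict.isLittleO.comp_tendsto htend
  have hlo2 : (fun z : ι → ℝ => 2 * F z - (z a - z b) * D) =o[l] fun z => z a - z b := by
    have he1 : (fun z : ι → ℝ => 2 * F z - (z a - z b) * D)
        = fun z => F z - F (T z) - f' (z - T z) := by
      funext z
      have h1 : F (T z) = - F z := by rw [swapCLM14_apply]; exact hanti z
      have h2 : f' (z - T z) = (z a - z b) * D := by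
        rw [sub_swapCLM14 a b hab z, map_smul]
        simp [hD, hv, smul_eq_mul]
      rw [h1, h2]; ring
    have he2 : (fun z : ι → ℝ => z - T z) =O[l] fun z => z a - z b := by
      apply IsBigO.of_bound ‖v‖
      filter_upwards with z
      rw [sub_swapCLM14 a b hab z, norm_smul]
      simp [mul_comm, hv]
    rw [he1]
    exact hlo.trans_isBigO he2
  have hquot := hlo2.tendsto_div_nhds_zero
  have hmain : Tendsto (fun z : ι → ℝ => 2 * (F z / (z a - z b)) - D) l (𝓝 0) := by
    apply hquot.congr'
    filter_upwards [self_mem_nhdsWithin] with z hz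
    have hz' : z a - z b ≠ 0 := sub_ne_zero.2 hz
    field_simp
  have h2 := (hmain.add_const D).div_const 2
  rw [hDval] at h2
  simp only [zero_add] at h2
  apply h2.congr
  intro z
  ring

lemma swapCLM14_single (a b : ι) :
    swapCLM14 a b (Pi.single a 1) = Pi.single b (1:ℝ) := by
  funext p
  simp only [swapCLM14_apply, Function.comp_apply, Pi.single_apply]
  by_cases h : p = b
  · simp [h, Equiv.swap_apply_right]
  · rw [if_neg h, if_neg]
    intro hc
    apply h
    have := congrArg (Equiv.swap a b) hc
    simpa [Equiv.swap_apply_left] using this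


lemma d1_contDiff14 (f : (ι → ℝ) → ℝ) (hf : ContDiff ℝ (⊤ : ℕ∞) f) (v : ι → ℝ) :
    ContDiff ℝ (⊤ : ℕ∞) fun w => fderiv ℝ f w v :=
  (hf.fderiv_right (mod_cast le_top)).clm_apply contDiff_const

lemma swap_fderiv14 (f : (ι → ℝ) → ℝ) (hf : ContDiff ℝ (⊤ : ℕ∞) f) (a b : ι)
    (hfs : ∀ z, f (z ∘ Equiv.swap a b) = f z) (z : ι → ℝ) :
    fderiv ℝ f (z ∘ Equiv.swap a b) (Pi.single b 1) = fderiv ℝ f z (Pi.single a 1) := by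
  set T := swapCLM14 a b with hT
  have hcomp : (f ∘ T) = f := by
    funext w
    exact hfs w
  have hd : fderiv ℝ (f ∘ T) z = (fderiv ℝ f (T z)).comp T :=
    (((hf.differentiable (by simp)) (T z)).hasFDerivAt.comp z T.hasFDerivAt).fderiv
  rw [hcomp] at hd
  calc fderiv ℝ f (z ∘ Equiv.swap a b) (Pi.single b 1)
      = fderiv ℝ f (T z) (T (Pi.single a 1)) := by rw [swapCLM14_single, swapCLM14_apply]
    _ = ((fderiv ℝ f (T z)).comp T) (Pi.single a 1) := rfl
    _ = fderiv ℝ f z (Pi.single a 1) := by rw [← hd]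

lemma anti14 (f : (ι → ℝ) → ℝ) (hf : ContDiff ℝ (⊤ : ℕ∞) f) (a b : ι)
    (hfs : ∀ z, f (z ∘ Equiv.swap a b) = f z) (z : ι → ℝ) :
    fderiv ℝ f (z ∘ Equiv.swap a b) (Pi.single a 1)
      - fderiv ℝ f (z ∘ Equiv.swap a b) (Pi.single b 1)
    = -(fderiv ℝ f z (Pi.single a 1) - fderiv ℝ f z (Pi.single b 1)) := by
  have hfs' : ∀ w, f (w ∘ Equiv.swap b a) = f w := by
    intro w; rw [Equiv.swap_comm]; exact hfs w
  have h1 := swap_fderiv14 f hf a b hfs z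
  have h2 := swap_fderiv14 f hf b a hfs' z
  rw [Equiv.swap_comm b a] at h2
  rw [h1, h2]; ring

lemma pair_limit14 (f : (ι → ℝ) → ℝ) (hf : ContDiff ℝ (⊤ : ℕ∞) f) (a b : ι) (hab : a ≠ b)
    (hfs : ∀ z, f (z ∘ Equiv.swap a b) = f z) (x : ι → ℝ) (hx : x a = x b) :
    Tendsto (fun z => (fderiv ℝ f z (Pi.single a 1) - fderiv ℝ f z (Pi.single b 1)) / (z a - z b))
      (nhdsWithin x {z | z a ≠ z b})
      (𝓝 (((fderiv ℝ (fun w => fderiv ℝ f w (Pi.single a 1)) x (Pi.single a 1)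
           - fderiv ℝ (fun w => fderiv ℝ f w (Pi.single b 1)) x (Pi.single a 1))
          - (fderiv ℝ (fun w => fderiv ℝ f w (Pi.single a 1)) x (Pi.single b 1)
           - fderiv ℝ (fun w => fderiv ℝ f w (Pi.single b 1)) x (Pi.single b 1))) / 2)) := by
  have hFa := d1_contDiff14 f hf (Pi.single a 1)
  have hFb := d1_contDiff14 f hf (Pi.single b 1)
  have hF : ContDiff ℝ (⊤ : ℕ∞) fun z => fderiv ℝ f z (Pi.single a 1) - fderiv ℝ f z (Pi.single b 1) :=
    hFa.sub hFb
  have hder : fderiv ℝ (fun z => fderiv ℝ f z (Pi.single a 1)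
        - fderiv ℝ f z (Pi.single b 1)) x
      = fderiv ℝ (fun w => fderiv ℝ f w (Pi.single a 1)) x
        - fderiv ℝ (fun w => fderiv ℝ f w (Pi.single b 1)) x :=
    fderiv_fun_sub (hFa.differentiable (by simp)).differentiableAt
      (hFb.differentiable (by simp)).differentiableAt
  have := quot_limit14 _ hF a b hab x hx (anti14 f hf a b hfs)
  rw [hder] at this
  simpa using this

end aux14

section aux14b
variable {m k : ℕ}

noncomputable def resCLM14 (m k : ℕ) : (Fin m → ℝ) →L[ℝ] (Fin m × Fin k → ℝ) :=
  ContinuousLinearMap.pi fun p => ContinuousLinearMap.proj p.1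

lemma resCLM14_apply (ν : Fin m → ℝ) : resCLM14 m k ν = fun p => ν p.1 := rfl

lemma resCLM14_single (i : Fin m) :
    resCLM14 m k (Pi.single i 1) = ∑ j : Fin k, Pi.single ((i, j) : Fin m × Fin k) (1:ℝ) := by
  funext p
  rw [Finset.sum_apply]
  simp only [resCLM14_apply, Pi.single_apply, Prod.ext_iff]
  by_cases h : p.1 = i
  · simp only [h, true_and, if_true]
    rw [Finset.sum_ite_eq univ p.2 (fun _ => (1:ℝ))]
    simp
  · simp [h]

lemma d1_contDiff14' (f : (Fin m × Fin k → ℝ) → ℝ) (hf : ContDiff ℝ (⊤ : ℕ∞) f) (v : Fin m × Fin k → ℝ) :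
    ContDiff ℝ (⊤ : ℕ∞) fun w => fderiv ℝ f w v :=
  (hf.fderiv_right (mod_cast le_top)).clm_apply contDiff_const

lemma res_fderiv14 (f : (Fin m × Fin k → ℝ) → ℝ) (hf : ContDiff ℝ (⊤ : ℕ∞) f) (μ : Fin m → ℝ)
    (i : Fin m) :
    fderiv ℝ (fun ν : Fin m → ℝ => f (fun p => ν p.1)) μ (Pi.single i 1)
      = ∑ j : Fin k, fderiv ℝ f (fun p => μ p.1) (Pi.single (i, j) 1) := by
  set L := resCLM14 m k with hL
  have hg : (fun ν : Fin m → ℝ => f (fun p => ν p.1)) = f ∘ L := rfl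
  have hd : fderiv ℝ (f ∘ L) μ = (fderiv ℝ f (L μ)).comp L :=
    (((hf.differentiable (by simp)) (L μ)).hasFDerivAt.comp μ L.hasFDerivAt).fderiv
  rw [hg, hd]
  have : (fderiv ℝ f (L μ)).comp L (Pi.single i 1)
      = fderiv ℝ f (L μ) (L (Pi.single i 1)) := rfl
  rw [this, resCLM14_single, map_sum]
  rfl

lemma res_fderiv2_14 (f : (Fin m × Fin k → ℝ) → ℝ) (hf : ContDiff ℝ (⊤ : ℕ∞) f) (μ : Fin m → ℝ)
    (i i' : Fin m) :
    fderiv ℝ (fun ν : Fin m → ℝ =>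
        fderiv ℝ (fun ν' : Fin m → ℝ => f (fun p => ν' p.1)) ν (Pi.single i' 1)) μ
      (Pi.single i 1)
      = ∑ j : Fin k, ∑ j' : Fin k,
          fderiv ℝ (fun w => fderiv ℝ f w (Pi.single (i', j') 1)) (fun p => μ p.1)
            (Pi.single (i, j) 1) := by
  set L := resCLM14 m k with hL
  set G : (Fin m × Fin k → ℝ) → ℝ :=
    fun w => ∑ j' : Fin k, fderiv ℝ f w (Pi.single (i', j') 1) with hG
  have hdiffb : ∀ (b : Fin m × Fin k),
      Differentiable ℝ fun w => fderiv ℝ f w (Pi.single b 1) :=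
    fun b => (d1_contDiff14' f hf _).differentiable (by simp)
  have hrw : (fun ν : Fin m → ℝ =>
      fderiv ℝ (fun ν' : Fin m → ℝ => f (fun p => ν' p.1)) ν (Pi.single i' 1)) = G ∘ L := by
    funext ν
    rw [res_fderiv14 f hf ν i']
    rfl
  rw [hrw]
  have hGdiff : Differentiable ℝ G := by
    apply Differentiable.fun_sum
    intro j' _
    exact hdiffb (i', j')
  have hd : fderiv ℝ (G ∘ L) μ = (fderiv ℝ G (L μ)).comp L :=
    ((hGdiff (L μ)).hasFDerivAt.comp μ L.hasFDerivAt).fderiv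
  rw [hd]
  have h1 : (fderiv ℝ G (L μ)).comp L (Pi.single i 1)
      = fderiv ℝ G (L μ) (L (Pi.single i 1)) := rfl
  rw [h1, resCLM14_single, map_sum]
  have hGfd : fderiv ℝ G (L μ)
      = ∑ j' : Fin k, fderiv ℝ (fun w => fderiv ℝ f w (Pi.single (i', j') 1)) (L μ) := by
    rw [hG]
    exact fderiv_fun_sum fun j' _ => ((hdiffb (i', j')) (L μ))
  refine Finset.sum_congr rfl fun j _ => ?_
  rw [hGfd]
  rw [ContinuousLinearMap.sum_apply]
  rfl

end aux14b


lemma key_algebra14 (m k : ℕ) (hk : 0 < k)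
    (d2 : (Fin m × Fin k) → (Fin m × Fin k) → ℝ)
    (d1 : (Fin m × Fin k) → ℝ) (μ : Fin m → ℝ) :
    (∑ a, d2 a a) + (-(1 / (k : ℝ))) * (∑ a, ∑ b ∈ univ \ {a},
        if b.1 = a.1 then ((d2 a a - d2 a b) - (d2 b a - d2 b b)) / 2
        else (d1 a - d1 b) / (μ a.1 - μ b.1))
    = (1 / (k : ℝ)) * ((∑ i, ∑ j, ∑ j', d2 (i, j) (i, j'))
      + (-(k : ℝ)) * ∑ i, ∑ i' ∈ univ \ {i},
          ((∑ j, d1 (i, j)) - (∑ j, d1 (i', j))) / (μ i - μ i')) := by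
  classical
  set c : Fin m → ℝ := fun i => ∑ j, d1 (i, j) with hc
  -- (1) replace restricted sums by full sums
  have h1 : ∀ a : Fin m × Fin k, (∑ b ∈ univ \ {a},
      if b.1 = a.1 then ((d2 a a - d2 a b) - (d2 b a - d2 b b)) / 2
      else (d1 a - d1 b) / (μ a.1 - μ b.1))
      = ∑ b, (if b.1 = a.1 then ((d2 a a - d2 a b) - (d2 b a - d2 b b)) / 2
      else (d1 a - d1 b) / (μ a.1 - μ b.1)) := by
    intro a
    rw [Finset.sdiff_singleton_eq_erase]
    apply Finset.sum_erase
    simp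
  have h1' : (∑ i, ∑ i' ∈ univ \ {i}, (c i - c i') / (μ i - μ i'))
      = ∑ i, ∑ i', (c i - c i') / (μ i - μ i') := by
    refine Finset.sum_congr rfl fun i _ => ?_
    rw [Finset.sdiff_singleton_eq_erase]
    apply Finset.sum_erase
    simp
  simp only [h1]
  rw [show (∑ i, ∑ i' ∈ univ \ {i}, ((∑ j, d1 (i, j)) - (∑ j, d1 (i', j))) / (μ i - μ i'))
      = ∑ i, ∑ i' ∈ univ \ {i}, (c i - c i') / (μ i - μ i') from rfl, h1']
  -- (2) split the ite
  have h2 : ∀ a b : Fin m × Fin k,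
      (if b.1 = a.1 then ((d2 a a - d2 a b) - (d2 b a - d2 b b)) / 2
        else (d1 a - d1 b) / (μ a.1 - μ b.1))
      = ((if b.1 = a.1 then d2 a a else 0) + (if b.1 = a.1 then d2 b b else 0)
          - (if b.1 = a.1 then d2 a b else 0) - (if b.1 = a.1 then d2 b a else 0)) / 2
        + (if b.1 = a.1 then 0 else (d1 a - d1 b) / (μ a.1 - μ b.1)) := by
    intro a b
    by_cases h : b.1 = a.1 <;> simp [h] <;> ring
  simp only [h2]
  have expand : ∀ (F G H I J : (Fin m × Fin k) → (Fin m × Fin k) → ℝ),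
      (∑ a, ∑ b, ((F a b + G a b - H a b - I a b) / 2 + J a b))
      = ((∑ a, ∑ b, F a b) + (∑ a, ∑ b, G a b) - (∑ a, ∑ b, H a b)
          - (∑ a, ∑ b, I a b)) / 2 + (∑ a, ∑ b, J a b) := by
    intro F G H I J
    have inner : ∀ a, (∑ b, ((F a b + G a b - H a b - I a b) / 2 + J a b))
        = ((∑ b, F a b) + (∑ b, G a b) - (∑ b, H a b) - (∑ b, I a b)) / 2
          + ∑ b, J a b := by
      intro a
      rw [Finset.sum_add_distrib, ← Finset.sum_div, Finset.sum_sub_distrib,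
        Finset.sum_sub_distrib, Finset.sum_add_distrib]
    simp only [inner]
    rw [Finset.sum_add_distrib, ← Finset.sum_div, Finset.sum_sub_distrib,
      Finset.sum_sub_distrib, Finset.sum_add_distrib]
  rw [expand]
  -- (3) swap identities
  have hswap1 : (∑ a : Fin m × Fin k, ∑ b : Fin m × Fin k, if b.1 = a.1 then d2 b b else 0)
      = ∑ a : Fin m × Fin k, ∑ b : Fin m × Fin k, if b.1 = a.1 then d2 a a else 0 := by
    rw [Finset.sum_comm]
    exact Finset.sum_congr rfl fun a _ => Finset.sum_congr rfl fun b _ =>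
      if_congr eq_comm rfl rfl
  have hswap2 : (∑ a : Fin m × Fin k, ∑ b : Fin m × Fin k, if b.1 = a.1 then d2 b a else 0)
      = ∑ a : Fin m × Fin k, ∑ b : Fin m × Fin k, if b.1 = a.1 then d2 a b else 0 := by
    rw [Finset.sum_comm]
    exact Finset.sum_congr rfl fun a _ => Finset.sum_congr rfl fun b _ =>
      if_congr eq_comm rfl rfl
  rw [hswap1, hswap2]
  -- (4) K1 = k * S1
  have hK1 : (∑ a : Fin m × Fin k, ∑ b : Fin m × Fin k, if b.1 = a.1 then d2 a a else 0)
      = (k : ℝ) * ∑ a, d2 a a := by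
    rw [Finset.mul_sum]
    refine Finset.sum_congr rfl fun a _ => ?_
    simp only [Fintype.sum_prod_type]
    have hinner : ∀ i' : Fin m, (∑ _j' : Fin k, if i' = a.1 then d2 a a else (0:ℝ))
        = if i' = a.1 then (k : ℝ) * d2 a a else 0 := by
      intro i'
      by_cases h : i' = a.1 <;> simp [h, Finset.sum_const, mul_comm]
    simp only [hinner]
    rw [Finset.sum_ite_eq' univ a.1 (fun _ => (k : ℝ) * d2 a a)]
    simp
  -- (5) K2
  have hK2 : (∑ a : Fin m × Fin k, ∑ b : Fin m × Fin k, if b.1 = a.1 then d2 a b else 0)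
      = ∑ i, ∑ j, ∑ j', d2 (i, j) (i, j') := by
    simp only [Fintype.sum_prod_type]
    refine Finset.sum_congr rfl fun i _ => Finset.sum_congr rfl fun j _ => ?_
    have hinner : ∀ i' : Fin m, (∑ j' : Fin k, if i' = i then d2 (i, j) (i', j') else (0:ℝ))
        = if i' = i then (∑ j', d2 (i, j) (i', j')) else 0 := by
      intro i'
      by_cases h : i' = i <;> simp [h]
    simp only [hinner]
    rw [Finset.sum_ite_eq' univ i (fun i' => ∑ j', d2 (i, j) (i', j'))]
    simp
  rw [hK1, hK2]
  -- (6) Sc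
  have hSc : (∑ a : Fin m × Fin k, ∑ b : Fin m × Fin k,
        if b.1 = a.1 then 0 else (d1 a - d1 b) / (μ a.1 - μ b.1))
      = (k : ℝ) * ∑ i, ∑ i', (c i - c i') / (μ i - μ i') := by
    simp only [Fintype.sum_prod_type]
    rw [Finset.mul_sum]
    refine Finset.sum_congr rfl fun i _ => ?_
    rw [Finset.sum_comm]
    rw [Finset.mul_sum]
    refine Finset.sum_congr rfl fun i' _ => ?_
    by_cases h : i' = i
    · simp [h]
    · have hstep : ∀ j : Fin k, (∑ j' : Fin k,
          if i' = i then (0:ℝ) else (d1 (i, j) - d1 (i', j')) / (μ i - μ i'))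
          = ((k : ℝ) * d1 (i, j) - c i') / (μ i - μ i') := by
        intro j
        simp only [if_neg h]
        rw [← Finset.sum_div, Finset.sum_sub_distrib, Finset.sum_const]
        simp [hc, mul_comm]
      simp only [hstep]
      rw [← Finset.sum_div, Finset.sum_sub_distrib, Finset.sum_const]
      have e1 : (∑ x : Fin k, (k:ℝ) * d1 (i, x)) = (k:ℝ) * c i := by
        rw [hc]; rw [Finset.mul_sum]
      have e2 : (#(univ : Finset (Fin k))) • c i' = (k:ℝ) * c i' := by
        simp [card_univ, nsmul_eq_mul]
      rw [e1, e2, ← mul_sub, mul_div_assoc]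
  rw [hSc]
  -- final ring computation
  have hk' : (k : ℝ) ≠ 0 := Nat.cast_ne_zero.2 hk.ne'
  field_simp
  ring


/-- The conjugated Calogero-Moser (Dunkl Laplacian) operator
`L̄_{p₂}(c) = ∑_a ∂_a² + 2c ∑_{a<b} (∂_a - ∂_b)/(z_a - z_b)`
(written as `c ∑_{a≠b} (∂_a - ∂_b)/(z_a - z_b)`). -/
noncomputable def cmOp14 {α : Type*} [Fintype α] [DecidableEq α] (c : ℝ)
    (f : (α → ℝ) → ℝ) (z : α → ℝ) : ℝ :=
  (∑ a, fderiv ℝ (fun w => fderiv ℝ f w (Pi.single a 1)) z (Pi.single a 1))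
    + c * ∑ a, ∑ b ∈ univ \ {a},
        (fderiv ℝ f z (Pi.single a 1) - fderiv ℝ f z (Pi.single b 1)) / (z a - z b)

/-- Lemma 6.6: with `Res_k` the specialization `μ_i^j ↦ μ_i`, one has
`Res_k ∘ L̄_{p₂}^{(k(N-1))}(-1/k) = (1/k) L̄_{p₂}^{(N-1)}(-k) ∘ Res_k`
on functions symmetric in each group `{μ_i^1,…,μ_i^k}`.  (The left side, a priori
defined off the diagonals, extends continuously to the specialization point with
the claimed value.) -/
theorem stmt14 (m k : ℕ) (hk : 0 < k)
    (f : (Fin m × Fin k → ℝ) → ℝ) (hf : ContDiff ℝ (⊤ : ℕ∞) f)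
    (hsym : ∀ (i : Fin m) (j j' : Fin k) (z : Fin m × Fin k → ℝ),
      f (z ∘ Equiv.swap (i, j) (i, j')) = f z)
    (μ : Fin m → ℝ) (hμ : Function.Injective μ) :
    Tendsto (cmOp14 (-(1 / (k : ℝ))) f)
      (nhdsWithin (fun p => μ p.1) {z : Fin m × Fin k → ℝ | Function.Injective z})
      (nhds ((1 / (k : ℝ)) * cmOp14 (-(k : ℝ)) (fun ν => f (fun p => ν p.1)) μ)) := by
  classical
  set x : Fin m × Fin k → ℝ := fun p => μ p.1 with hxdef
  set L := nhdsWithin x {z : Fin m × Fin k → ℝ | Function.Injective z} with hLdef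
  set d2 : (Fin m × Fin k) → (Fin m × Fin k) → ℝ :=
    fun a b => fderiv ℝ (fun w => fderiv ℝ f w (Pi.single b 1)) x (Pi.single a 1) with hd2
  set d1 : (Fin m × Fin k) → ℝ := fun a => fderiv ℝ f x (Pi.single a 1) with hd1
  set Lab : (Fin m × Fin k) → (Fin m × Fin k) → ℝ := fun a b =>
    if b.1 = a.1 then ((d2 a a - d2 a b) - (d2 b a - d2 b b)) / 2
    else (d1 a - d1 b) / (μ a.1 - μ b.1) with hLab
  have hpair : ∀ a b : Fin m × Fin k, a ≠ b →
      Tendsto (fun z => (fderiv ℝ f z (Pi.single a 1) - fderiv ℝ f z (Pi.single b 1))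
          / (z a - z b)) L (nhds (Lab a b)) := by
    intro a b hne
    by_cases hb1 : b.1 = a.1
    · have hfs : ∀ z, f (z ∘ Equiv.swap a b) = f z := by
        intro z
        have hae : ((a.1, a.2) : Fin m × Fin k) = a := rfl
        have hbe : ((a.1, b.2) : Fin m × Fin k) = b := by
          rw [← hb1]
        have := hsym a.1 a.2 b.2 z
        rwa [hae, hbe] at this
      have hxab : x a = x b := by
        simp only [hxdef, hb1]
      have hsub : {z : Fin m × Fin k → ℝ | Function.Injective z} ⊆ {z | z a ≠ z b} :=
        fun z hz h => hne (hz h)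
      have h := (pair_limit14 f hf a b hne hfs x hxab).mono_left
        (nhdsWithin_mono x hsub)
      rw [hLab]
      simp only [if_pos hb1]
      exact h
    · have hnum : Tendsto (fun z : Fin m × Fin k → ℝ =>
          fderiv ℝ f z (Pi.single a 1) - fderiv ℝ f z (Pi.single b 1)) L
          (nhds (d1 a - d1 b)) := by
        have hc : Continuous fun z : Fin m × Fin k → ℝ =>
            fderiv ℝ f z (Pi.single a 1) - fderiv ℝ f z (Pi.single b 1) :=
          ((d1_contDiff14' f hf _).continuous).sub ((d1_contDiff14' f hf _).continuous)
        exact (hc.tendsto x).mono_left nhdsWithin_le_nhds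
      have hden : Tendsto (fun z : Fin m × Fin k → ℝ => z a - z b) L
          (nhds (μ a.1 - μ b.1)) := by
        have hc : Continuous fun z : Fin m × Fin k → ℝ => z a - z b :=
          (continuous_apply a).sub (continuous_apply b)
        exact (hc.tendsto x).mono_left
          (nhdsWithin_le_nhds (s := {z : Fin m × Fin k → ℝ | Function.Injective z}))
      have hdnz : μ a.1 - μ b.1 ≠ 0 := by
        refine sub_ne_zero.2 fun h => hb1 ?_
        exact (hμ h).symm
      have := hnum.div hden hdnz
      rw [hLab]
      simp only [if_neg hb1]
      exact this
  have hto : Tendsto (cmOp14 (-(1 / (k : ℝ))) f) L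
      (nhds ((∑ a, d2 a a)
        + (-(1 / (k : ℝ))) * ∑ a, ∑ b ∈ univ \ {a}, Lab a b)) := by
    have : cmOp14 (-(1 / (k : ℝ))) f = fun z =>
        (∑ a, fderiv ℝ (fun w => fderiv ℝ f w (Pi.single a 1)) z (Pi.single a 1))
        + (-(1 / (k : ℝ))) * ∑ a, ∑ b ∈ univ \ {a},
          (fderiv ℝ f z (Pi.single a 1) - fderiv ℝ f z (Pi.single b 1)) / (z a - z b) := rfl
    rw [this]
    apply Tendsto.add
    · apply tendsto_finset_sum
      intro a _
      have hc : Continuous fun z : Fin m × Fin k → ℝ =>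
          fderiv ℝ (fun w => fderiv ℝ f w (Pi.single a 1)) z (Pi.single a 1) :=
        (d1_contDiff14' _ (d1_contDiff14' f hf _) _).continuous
      exact (hc.tendsto x).mono_left nhdsWithin_le_nhds
    · apply Tendsto.const_mul
      apply tendsto_finset_sum
      intro a _
      apply tendsto_finset_sum
      intro b hb
      have hne : a ≠ b := by
        rw [Finset.mem_sdiff, Finset.mem_singleton] at hb
        exact fun h => hb.2 h.symm
      exact hpair a b hne
  have key : (∑ a, d2 a a) + (-(1 / (k : ℝ))) * (∑ a, ∑ b ∈ univ \ {a}, Lab a b)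
      = (1 / (k : ℝ)) * cmOp14 (-(k : ℝ)) (fun ν => f (fun p => ν p.1)) μ := by
    have hRHSop : cmOp14 (-(k : ℝ)) (fun ν => f (fun p => ν p.1)) μ
        = (∑ i, ∑ j, ∑ j', fderiv ℝ (fun w => fderiv ℝ f w (Pi.single ((i, j') : Fin m × Fin k) 1))
              (fun p => μ p.1) (Pi.single (i, j) 1))
          + (-(k : ℝ)) * ∑ i, ∑ i' ∈ univ \ {i},
              ((∑ j, fderiv ℝ f (fun p => μ p.1) (Pi.single ((i, j) : Fin m × Fin k) 1))
                - (∑ j, fderiv ℝ f (fun p => μ p.1) (Pi.single ((i', j) : Fin m × Fin k) 1)))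
                / (μ i - μ i') := by
      show (∑ i, fderiv ℝ (fun w => fderiv ℝ (fun ν => f (fun p => ν p.1)) w (Pi.single i 1)) μ
            (Pi.single i 1))
          + (-(k : ℝ)) * (∑ i, ∑ i' ∈ univ \ {i},
            (fderiv ℝ (fun ν => f (fun p => ν p.1)) μ (Pi.single i 1)
              - fderiv ℝ (fun ν => f (fun p => ν p.1)) μ (Pi.single i' 1)) / (μ i - μ i')) = _
      congr 1
      · exact Finset.sum_congr rfl fun i _ => res_fderiv2_14 f hf μ i i
      · congr 1
        refine Finset.sum_congr rfl fun i _ => Finset.sum_congr rfl fun i' _ => ?_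
        rw [res_fderiv14 f hf μ i, res_fderiv14 f hf μ i']
    rw [hRHSop, hLab]
    simp only [hd2, hd1, hxdef]
    have halg := key_algebra14 m k hk
      (fun a b => fderiv ℝ (fun w => fderiv ℝ f w (Pi.single b 1))
        (fun p => μ p.1) (Pi.single a 1))
      (fun a => fderiv ℝ f (fun p => μ p.1) (Pi.single a 1)) μ
    exact halg
  rw [← key]
  exact hto
end

section
/- For a partition $\tau$ with at most $k$ parts and for the monomial symmetric polynomial $m_\tau$ in variables $\mu_i^1,\dots,\mu_i^k$, if $\mathrm{Res}$ denotes the specialization $\mu_i^j\mapsto\mu_i$, then $\mathrm{Res}\Big(\big(\sum_j \partial_{\mu_i^j}^2 - \tfrac{2}{k}\sum_{j_1<j_2}\frac{\partial_{\mu_i^{j_1}}-\partial_{\mu_i^{j_2}}}{\mu_i^{j_1}-\mu_i^{j_2}}\big)\,m_\tau\Big) = \tfrac{1}{k}\,\partial_{\mu_i}^2\,\mathrm{Res}(m_\tau)$, equivalently both sides equal $\tfrac{1}{k}|\tau|(|\tau|-1)\,\mu_i^{|\tau|-2}$ times the number of distinct rearrangements of $\tau$. -/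
open Finset Filter

/-- The operator `∑_j ∂_j² - (2/k) ∑_{j₁<j₂} (∂_{j₁} - ∂_{j₂})/(z_{j₁} - z_{j₂})`
(written with `c = -1/k` as `∑ ∂² + c ∑_{a≠b} (∂_a - ∂_b)/(z_a - z_b)`). -/
noncomputable def cmOp15 {α : Type*} [Fintype α] [DecidableEq α] (c : ℝ)
    (f : (α → ℝ) → ℝ) (z : α → ℝ) : ℝ :=
  (∑ a, fderiv ℝ (fun w => fderiv ℝ f w (Pi.single a 1)) z (Pi.single a 1))
    + c * ∑ a, ∑ b ∈ univ \ {a},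
        (fderiv ℝ f z (Pi.single a 1) - fderiv ℝ f z (Pi.single b 1)) / (z a - z b)

private lemma aux_contDiff {k : ℕ} (τ : Fin k → ℕ) :
    ContDiff ℝ (⊤ : ℕ∞) (fun z : Fin k → ℝ => ∑ σ : Equiv.Perm (Fin k), ∏ j, z j ^ τ (σ j)) :=
  ContDiff.sum fun _ _ => contDiff_prod fun j _ =>
    (ContinuousLinearMap.proj j : (Fin k → ℝ) →L[ℝ] ℝ).contDiff.pow _

private lemma aux_swap {k : ℕ} (τ : Fin k → ℕ) (a b : Fin k) (z : Fin k → ℝ) :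
    (∑ σ : Equiv.Perm (Fin k), ∏ j, z (Equiv.swap a b j) ^ τ (σ j))
      = ∑ σ : Equiv.Perm (Fin k), ∏ j, z j ^ τ (σ j) := by
  rw [← Equiv.sum_comp (Equiv.mulRight (Equiv.swap a b))
    (fun σ : Equiv.Perm (Fin k) => ∏ j, z j ^ τ (σ j))]
  refine Finset.sum_congr rfl fun σ _ => ?_
  rw [← Equiv.prod_comp (Equiv.swap a b)
    (fun j => z j ^ τ ((Equiv.mulRight (Equiv.swap a b) σ) j))]
  refine Finset.prod_congr rfl fun j _ => ?_
  simp [Equiv.Perm.mul_apply, Equiv.swap_apply_self]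

private lemma aux_fderiv_swap {k : ℕ} (τ : Fin k → ℕ) (a b : Fin k) (z : Fin k → ℝ)
    (hz : z a = z b) :
    fderiv ℝ (fun z : Fin k → ℝ => ∑ σ : Equiv.Perm (Fin k), ∏ j, z j ^ τ (σ j)) z
        (Pi.single a 1)
      = fderiv ℝ (fun z : Fin k → ℝ => ∑ σ : Equiv.Perm (Fin k), ∏ j, z j ^ τ (σ j)) z
        (Pi.single b 1) := by
  rcases eq_or_ne a b with rfl | hab
  · rfl
  set P : (Fin k → ℝ) → ℝ := fun z => ∑ σ : Equiv.Perm (Fin k), ∏ j, z j ^ τ (σ j) with hPdef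
  set A : (Fin k → ℝ) →L[ℝ] (Fin k → ℝ) :=
    ContinuousLinearMap.pi (fun j => ContinuousLinearMap.proj (Equiv.swap a b j)) with hAdef
  have hPdiff : Differentiable ℝ P := (aux_contDiff τ).differentiable (by simp)
  have hcomp : fderiv ℝ P z = (fderiv ℝ P (A z)).comp A := by
    have hPA : P = P ∘ A := by
      funext w
      exact (aux_swap τ a b w).symm
    nth_rewrite 1 [hPA]
    rw [fderiv_comp z (hPdiff (A z)) A.differentiableAt, A.fderiv]
  have hAz : A z = z := by
    funext j
    show z (Equiv.swap a b j) = z j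
    rcases eq_or_ne j a with rfl | hja
    · rw [Equiv.swap_apply_left]; exact hz.symm
    rcases eq_or_ne j b with rfl | hjb
    · rw [Equiv.swap_apply_right]; exact hz
    · rw [Equiv.swap_apply_of_ne_of_ne hja hjb]
  have hsingle : A (Pi.single a 1) = Pi.single b 1 := by
    funext j
    have hrw : A (Pi.single a 1) j = (Pi.single a 1 : Fin k → ℝ) (Equiv.swap a b j) := rfl
    rw [hrw]
    rcases eq_or_ne j b with rfl | hjb
    · rw [Equiv.swap_apply_right, Pi.single_eq_same, Pi.single_eq_same]
    have h1 : Equiv.swap a b j ≠ a := by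
      rcases eq_or_ne j a with rfl | hja
      · rw [Equiv.swap_apply_left]; exact Ne.symm hab
      · rw [Equiv.swap_apply_of_ne_of_ne hja hjb]; exact hja
    rw [Pi.single_eq_of_ne h1, Pi.single_eq_of_ne hjb]
  calc fderiv ℝ P z (Pi.single a 1) = (fderiv ℝ P (A z)) (A (Pi.single a 1)) := by
        rw [hcomp]; rfl
    _ = fderiv ℝ P z (Pi.single b 1) := by rw [hAz, hsingle]

private lemma aux_pair {k : ℕ} (P : (Fin k → ℝ) → ℝ) (hP : ContDiff ℝ (⊤ : ℕ∞) P)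
    (a b : Fin k) (hab : a ≠ b)
    (hsym : ∀ z : Fin k → ℝ, z a = z b →
      fderiv ℝ P z (Pi.single a 1) = fderiv ℝ P z (Pi.single b 1)) (μ : ℝ) :
    Tendsto (fun z : Fin k → ℝ =>
        (fderiv ℝ P z (Pi.single a 1) - fderiv ℝ P z (Pi.single b 1)) / (z a - z b))
      (nhdsWithin (fun _ => μ) {z : Fin k → ℝ | Function.Injective z})
      (nhds (fderiv ℝ
        (fun w => fderiv ℝ P w (Pi.single a 1) - fderiv ℝ P w (Pi.single b 1))
        (fun _ => μ) (Pi.single a 1))) := by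
  classical
  set z₀ : Fin k → ℝ := fun _ => μ with hz₀
  have hP' : ContDiff ℝ (⊤ : ℕ∞) (fderiv ℝ P) := hP.fderiv_right (m := (⊤ : ℕ∞)) (mod_cast le_top)
  set G : (Fin k → ℝ) → ℝ :=
    fun w => fderiv ℝ P w (Pi.single a 1) - fderiv ℝ P w (Pi.single b 1) with hGdef
  have hG : ContDiff ℝ (⊤ : ℕ∞) G := by
    have h1 : ∀ v : Fin k → ℝ, ContDiff ℝ (⊤ : ℕ∞) (fun w => fderiv ℝ P w v) := fun v =>
      ((ContinuousLinearMap.apply ℝ ℝ v).contDiff).comp hP'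
    exact (h1 _).sub (h1 _)
  have hGdiff : Differentiable ℝ G := hG.differentiable (by simp)
  set H : (Fin k → ℝ) → ℝ := fun w => fderiv ℝ G w (Pi.single a 1) with hHdef
  have hH : Continuous H := by
    have hc : ContDiff ℝ (⊤ : ℕ∞) (fun w => fderiv ℝ G w (Pi.single a 1)) :=
      ((ContinuousLinearMap.apply ℝ ℝ (Pi.single a 1 : Fin k → ℝ)).contDiff).comp
        (hG.fderiv_right (m := (⊤ : ℕ∞)) (mod_cast le_top))
    exact hc.continuous
  have hG0 : ∀ w : Fin k → ℝ, w a = w b → G w = 0 := fun w hw => sub_eq_zero.mpr (hsym w hw)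
  rw [Metric.tendsto_nhdsWithin_nhds]
  intro ε hε
  obtain ⟨δ, hδpos, hδ⟩ := Metric.continuousAt_iff.mp (hH.continuousAt (x := z₀)) ε hε
  refine ⟨δ, hδpos, ?_⟩
  intro z hzS hzd
  have hzab : z a ≠ z b := fun h => hab (hzS h)
  have hpath : ∀ t : ℝ, HasDerivAt (fun t => G (Function.update z a t))
      (H (Function.update z a t)) t := by
    intro t
    have hup : (fun s : ℝ => Function.update z a s)
        = fun s => Function.update z a 0 + s • Pi.single a 1 := by
      funext s j
      rcases eq_or_ne j a with rfl | hja
      · simp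
      · simp [Function.update_of_ne hja, Pi.single_eq_of_ne hja]
    have hd : HasDerivAt (fun s : ℝ => Function.update z a s) (Pi.single a 1) t := by
      rw [hup]
      simpa using ((hasDerivAt_id t).smul_const
        (Pi.single a (1:ℝ))).const_add (Function.update z a 0)
    exact (hGdiff (Function.update z a t)).hasFDerivAt.comp_hasDerivAt t hd
  have hgc : Continuous (fun t : ℝ => G (Function.update z a t)) :=
    continuous_iff_continuousAt.mpr fun t => (hpath t).continuousAt
  have h1 : dist (z a) μ < δ := lt_of_le_of_lt (by simpa using dist_le_pi_dist z z₀ a) hzd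
  have h2 : dist (z b) μ < δ := lt_of_le_of_lt (by simpa using dist_le_pi_dist z z₀ b) hzd
  have hupa : Function.update z a (z b) a = Function.update z a (z b) b := by
    rw [Function.update_self, Function.update_of_ne (Ne.symm hab)]
  obtain ⟨ξ, hξd, hξ⟩ : ∃ ξ : ℝ, dist ξ μ < δ
      ∧ H (Function.update z a ξ) = G z / (z a - z b) := by
    have hza : z a - z b ≠ 0 := sub_ne_zero.mpr hzab
    have hzb : z b - z a ≠ 0 := sub_ne_zero.mpr (Ne.symm hzab)
    rcases lt_or_gt_of_ne hzab with h | h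
    · obtain ⟨c, hc, hceq⟩ := exists_hasDerivAt_eq_slope
        (fun t => G (Function.update z a t)) (fun t => H (Function.update z a t)) h
        hgc.continuousOn (fun x _ => hpath x)
      refine ⟨c, ?_, ?_⟩
      · rw [Real.dist_eq] at h1 h2 ⊢
        rw [abs_lt] at h1 h2 ⊢
        obtain ⟨hc1, hc2⟩ := hc
        constructor <;> linarith
      · rw [hceq, Function.update_eq_self a z, hG0 _ hupa]
        rw [div_eq_div_iff hzb hza]; ring
    · obtain ⟨c, hc, hceq⟩ := exists_hasDerivAt_eq_slope
        (fun t => G (Function.update z a t)) (fun t => H (Function.update z a t)) h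
        hgc.continuousOn (fun x _ => hpath x)
      refine ⟨c, ?_, ?_⟩
      · rw [Real.dist_eq] at h1 h2 ⊢
        rw [abs_lt] at h1 h2 ⊢
        obtain ⟨hc1, hc2⟩ := hc
        constructor <;> linarith
      · rw [hceq, Function.update_eq_self a z, hG0 _ hupa, sub_zero]
  have hwd : dist (Function.update z a ξ) z₀ < δ := by
    rw [dist_pi_lt_iff hδpos]
    intro j
    rcases eq_or_ne j a with rfl | hja
    · simpa [Function.update_self] using hξd
    · rw [Function.update_of_ne hja]
      exact lt_of_le_of_lt (dist_le_pi_dist z z₀ j) hzd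
  have hfin := hδ hwd
  rw [hξ] at hfin
  simpa only [hGdef, hHdef] using hfin

/-- For a partition `τ` with at most `k` parts and the (permutation-summed) monomial
symmetric polynomial `P(z) = ∑_{σ ∈ S_k} ∏_j z_j^{τ(σ(j))}`, the specialization
`μ_i^j ↦ μ` of `(∑_j ∂_j² - (2/k) ∑_{j₁<j₂} (∂_{j₁}-∂_{j₂})/(μ_i^{j₁}-μ_i^{j₂})) P`
equals `(1/k)|τ|(|τ|-1) μ^{|τ|-2}` times `k!` (the permutation count). -/
theorem stmt15 (k : ℕ) (hk : 0 < k) (τ : Fin k → ℕ) (μ : ℝ) :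
    Tendsto
      (cmOp15 (-(1 / (k : ℝ)))
        (fun z : Fin k → ℝ => ∑ σ : Equiv.Perm (Fin k), ∏ j, z j ^ τ (σ j)))
      (nhdsWithin (fun _ => μ) {z : Fin k → ℝ | Function.Injective z})
      (nhds ((1 / (k : ℝ)) * ((∑ j, τ j : ℕ) : ℝ) * (((∑ j, τ j : ℕ) : ℝ) - 1) *
        μ ^ ((∑ j, τ j) - 2) * (Nat.factorial k : ℝ))) := by
  classical
  have hkR : (k : ℝ) ≠ 0 := Nat.cast_ne_zero.mpr hk.ne'
  set N := ∑ j, τ j with hN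
  set P : (Fin k → ℝ) → ℝ :=
    fun z => ∑ σ : Equiv.Perm (Fin k), ∏ j, z j ^ τ (σ j) with hPdef
  set z₀ : Fin k → ℝ := fun _ => μ with hz₀
  have hP : ContDiff ℝ (⊤ : ℕ∞) P := aux_contDiff τ
  have hP' : ContDiff ℝ (⊤ : ℕ∞) (fderiv ℝ P) := hP.fderiv_right (m := (⊤ : ℕ∞)) (mod_cast le_top)
  have hB : ∀ v : Fin k → ℝ, ContDiff ℝ (⊤ : ℕ∞) (fun w => fderiv ℝ P w v) := fun v =>
    ((ContinuousLinearMap.apply ℝ ℝ v).contDiff).comp hP'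
  set A : Fin k → Fin k → ℝ := fun a b =>
    fderiv ℝ (fun w => fderiv ℝ P w (Pi.single b 1)) z₀ (Pi.single a 1) with hA
  -- first term tendsto
  have T1 : Tendsto (fun z : Fin k → ℝ =>
        ∑ a, fderiv ℝ (fun w => fderiv ℝ P w (Pi.single a 1)) z (Pi.single a 1))
      (nhdsWithin z₀ {z : Fin k → ℝ | Function.Injective z}) (nhds (∑ a, A a a)) := by
    have hcont : ∀ a : Fin k, Continuous
        (fun z => fderiv ℝ (fun w => fderiv ℝ P w (Pi.single a 1)) z (Pi.single a 1)) := by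
      intro a
      have hc : ContDiff ℝ (⊤ : ℕ∞)
          (fun z => fderiv ℝ (fun w => fderiv ℝ P w (Pi.single a 1)) z (Pi.single a 1)) :=
        ((ContinuousLinearMap.apply ℝ ℝ (Pi.single a 1 : Fin k → ℝ)).contDiff).comp
          ((hB (Pi.single a 1)).fderiv_right (m := (⊤ : ℕ∞)) (mod_cast le_top))
      exact hc.continuous
    exact ((continuous_finset_sum _ fun a _ => hcont a).tendsto z₀).mono_left
      nhdsWithin_le_nhds
  -- pair terms tendsto
  have T2 : ∀ a b : Fin k, b ∈ univ \ {a} → Tendsto (fun z : Fin k → ℝ =>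
        (fderiv ℝ P z (Pi.single a 1) - fderiv ℝ P z (Pi.single b 1)) / (z a - z b))
      (nhdsWithin z₀ {z : Fin k → ℝ | Function.Injective z}) (nhds (A a a - A a b)) := by
    intro a b hb
    have hab : a ≠ b := by
      have := (Finset.mem_sdiff.mp hb).2
      simp only [Finset.mem_singleton] at this
      exact Ne.symm this
    have hsym : ∀ z : Fin k → ℝ, z a = z b →
        fderiv ℝ P z (Pi.single a 1) = fderiv ℝ P z (Pi.single b 1) :=
      fun z hz => aux_fderiv_swap τ a b z hz
    have h := aux_pair P hP a b hab hsym μ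
    have heq : fderiv ℝ
        (fun w => fderiv ℝ P w (Pi.single a 1) - fderiv ℝ P w (Pi.single b 1)) z₀
        (Pi.single a 1) = A a a - A a b := by
      rw [fderiv_fun_sub ((hB _).differentiable (by simp)).differentiableAt
        ((hB _).differentiable (by simp)).differentiableAt]
      rfl
    rw [heq] at h
    exact h
  have main : Tendsto (fun z : Fin k → ℝ =>
      (∑ a, fderiv ℝ (fun w => fderiv ℝ P w (Pi.single a 1)) z (Pi.single a 1))
        + (-(1 / (k : ℝ))) * ∑ a, ∑ b ∈ univ \ {a},
            (fderiv ℝ P z (Pi.single a 1) - fderiv ℝ P z (Pi.single b 1)) / (z a - z b))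
      (nhdsWithin z₀ {z : Fin k → ℝ | Function.Injective z})
      (nhds ((∑ a, A a a)
        + (-(1 / (k : ℝ))) * ∑ a, ∑ b ∈ univ \ {a}, (A a a - A a b))) :=
    T1.add ((tendsto_finset_sum (univ : Finset (Fin k)) (fun a _ =>
      tendsto_finset_sum (univ \ {a}) fun b hb => T2 a b hb)).const_mul (-(1 / (k : ℝ))))
  -- value computation
  set One : Fin k → ℝ := fun _ => (1:ℝ) with hOne
  have hsum_single : (∑ b : Fin k, Pi.single b (1:ℝ)) = One :=
    Finset.univ_sum_single One
  set D : ℝ := fderiv ℝ (fun w => fderiv ℝ P w One) z₀ One with hD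
  have hC1 : D = ∑ a, ∑ b, A a b := by
    have h1 : (fun w => fderiv ℝ P w One) = fun w => ∑ b, fderiv ℝ P w (Pi.single b 1) := by
      funext w
      rw [← hsum_single, map_sum]
    have h2 : ∀ b : Fin k, (fderiv ℝ (fun w => fderiv ℝ P w (Pi.single b 1)) z₀) One
        = ∑ a, A a b := by
      intro b
      rw [← hsum_single, map_sum]
    rw [hD, h1, fderiv_fun_sum (fun b _ => ((hB (Pi.single b 1)).differentiable
      (by simp)).differentiableAt), ContinuousLinearMap.sum_apply,
      Finset.sum_congr rfl (fun b _ => h2 b), Finset.sum_comm]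
  -- 1-dimensional computation of D
  have hγ : ∀ t : ℝ, HasDerivAt (fun s : ℝ => z₀ + s • One) One t := by
    intro t
    simpa using ((hasDerivAt_id t).smul_const One).const_add z₀
  have hψ : ∀ t : ℝ, fderiv ℝ P (z₀ + t • One) One
      = (k.factorial : ℝ) * ↑N * (μ + t) ^ (N - 1) := by
    intro t
    have h1 : HasDerivAt (fun s : ℝ => P (z₀ + s • One)) (fderiv ℝ P (z₀ + t • One) One) t :=
      ((hP.differentiable (by simp)) _).hasFDerivAt.comp_hasDerivAt t (hγ t)
    have h2 : (fun s : ℝ => P (z₀ + s • One)) = fun s => (k.factorial : ℝ) * (μ + s) ^ N := by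
      funext s
      have hval : ∀ σ : Equiv.Perm (Fin k), ∏ j, (z₀ + s • One) j ^ τ (σ j) = (μ + s) ^ N := by
        intro σ
        have hcoord : ∀ j, (z₀ + s • One) j = μ + s := by
          intro j
          simp [hz₀, hOne]
        calc ∏ j, (z₀ + s • One) j ^ τ (σ j) = ∏ j, (μ + s) ^ τ (σ j) :=
              Finset.prod_congr rfl fun j _ => by rw [hcoord j]
          _ = (μ + s) ^ (∑ j, τ (σ j)) := Finset.prod_pow_eq_pow_sum _ _ _
          _ = (μ + s) ^ N := by rw [Equiv.sum_comp σ τ]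
      show (∑ σ : Equiv.Perm (Fin k), ∏ j, (z₀ + s • One) j ^ τ (σ j)) = _
      rw [Finset.sum_congr rfl fun σ _ => hval σ, Finset.sum_const, Finset.card_univ,
        Fintype.card_perm, Fintype.card_fin, nsmul_eq_mul]
    have h3 : HasDerivAt (fun s : ℝ => P (z₀ + s • One))
        ((k.factorial : ℝ) * (↑N * (μ + t) ^ (N - 1) * 1)) t := by
      rw [h2]
      exact (((hasDerivAt_id t).const_add μ).pow N).const_mul _
    have h4 := h1.unique h3
    rw [h4]; ring
  have hψ' : HasDerivAt (fun t : ℝ => fderiv ℝ P (z₀ + t • One) One) D 0 := by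
    have hD1 : Differentiable ℝ (fun w => fderiv ℝ P w One) := (hB One).differentiable (by simp)
    have h5 := (hD1 (z₀ + (0:ℝ) • One)).hasFDerivAt.comp_hasDerivAt 0 (hγ 0)
    have h0 : z₀ + (0:ℝ) • One = z₀ := by simp
    rw [h0] at h5
    exact h5
  have hψ'' : HasDerivAt (fun t : ℝ => fderiv ℝ P (z₀ + t • One) One)
      (((k.factorial : ℝ) * ↑N) * (↑(N - 1) * (μ + 0) ^ (N - 1 - 1) * 1)) 0 := by
    have heqf : (fun t : ℝ => fderiv ℝ P (z₀ + t • One) One)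
        = fun t => ((k.factorial : ℝ) * ↑N) * (μ + t) ^ (N - 1) := by
      funext t
      rw [hψ t]
    rw [heqf]
    exact (((hasDerivAt_id 0).const_add μ).pow (N - 1)).const_mul _
  have hDval : D = (k.factorial : ℝ) * ↑N * (↑(N - 1) * μ ^ (N - 2)) := by
    have h6 := hψ'.unique hψ''
    rw [h6, show N - 1 - 1 = N - 2 from by omega]
    ring
  -- final algebra
  have hinner : ∀ a : Fin k, ∑ b ∈ univ \ {a}, (A a a - A a b)
      = (k : ℝ) * A a a - ∑ b, A a b := by
    intro a
    rw [Finset.sum_sdiff_eq_sub (Finset.subset_univ {a}), Finset.sum_singleton, sub_self,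
      sub_zero, Finset.sum_sub_distrib, Finset.sum_const, Finset.card_univ, Fintype.card_fin,
      nsmul_eq_mul]
  have hfinal : (∑ a, A a a)
        + (-(1 / (k : ℝ))) * ∑ a, ∑ b ∈ univ \ {a}, (A a a - A a b)
      = 1 / (k : ℝ) * ↑N * ((N : ℝ) - 1) * μ ^ (N - 2) * (k.factorial : ℝ) := by
    rw [Finset.sum_congr rfl fun a _ => hinner a, Finset.sum_sub_distrib, ← Finset.mul_sum,
      ← hC1, hDval]
    rcases Nat.eq_zero_or_pos N with h | h
    · rw [h]
      norm_num
      field_simp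
      ring
    · rw [show ((N - 1 : ℕ) : ℝ) = (N : ℝ) - 1 from by
        rw [Nat.cast_sub h]; norm_num]
      field_simp
      ring
  rw [show cmOp15 (-(1 / (k : ℝ))) P = (fun z : Fin k → ℝ =>
      (∑ a, fderiv ℝ (fun w => fderiv ℝ P w (Pi.single a 1)) z (Pi.single a 1))
        + (-(1 / (k : ℝ))) * ∑ a, ∑ b ∈ univ \ {a},
            (fderiv ℝ P z (Pi.single a 1) - fderiv ℝ P z (Pi.single b 1)) / (z a - z b))
    from rfl, ← hfinal]
  exact main
end
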